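/- arXiv:2410.02738 — 5 statements merged into one kernel-verified Lean document; each statement's English description precedes it below -/
import Mathlib

section
/- For every complex number q with |q| < 1, the following identity holds: Σ_{n≥0} q^{2n} · (q^{4n+4}; q^4)_∞ · (q; q)_{2n} = 2(q^4; q^4)_∞/(1+q) − (q; q)_∞/(1+q). -/
/-!
Write `c n = (q^{4n+4}; q^4)_∞ (q; q)_{2n}` (`summandCoeff q n`). Since `(1 - q^{4n+4}) = (1 - q^{2n+2})(1 + q^{2n+2})`,
the ratio of consecutive terms is `c (n+1) / c n = (1 - q^{2n+1}) / (1 + q^{2n+2})`. Hence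
`e n = (1 + q^{2n}) c n` satisfies `e n - e (n+1) = (1 + q) q^{2n} c n`, so the series telescopes
to `e 0 - lim e = 2 (q^4; q^4)_∞ - (q; q)_∞`.
-/

/-- The finite q-Pochhammer symbol `(a; q)_n = ∏_{j=0}^{n-1} (1 - a q^j)`. -/
noncomputable def qPoch (a q : ℂ) (n : ℕ) : ℂ := ∏ j ∈ Finset.range n, (1 - a * q ^ j)

/-- The infinite q-Pochhammer symbol `(a; q)_∞ = ∏_{j=0}^{∞} (1 - a q^j)`. -/
noncomputable def qPochInf (a q : ℂ) : ℂ := ∏' j : ℕ, (1 - a * q ^ j)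

open Filter Topology Finset

section QPochhammer

variable {a q : ℂ}

lemma summable_norm_mul_pow (a : ℂ) (hq : ‖q‖ < 1) : Summable fun j : ℕ => ‖a * q ^ j‖ := by
  simpa only [norm_mul, norm_pow] using
    (summable_geometric_of_lt_one (norm_nonneg q) hq).mul_left ‖a‖

lemma multipliable_one_sub_mul_pow (a : ℂ) (hq : ‖q‖ < 1) :
    Multipliable fun j : ℕ => 1 - a * q ^ j := by
  simpa only [sub_eq_add_neg] using
    multipliable_one_add_of_summable (f := fun j => -(a * q ^ j))
      (by simpa only [norm_neg] using summable_norm_mul_pow a hq)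

lemma tendsto_qPoch (a : ℂ) (hq : ‖q‖ < 1) :
    Tendsto (qPoch a q) atTop (𝓝 (qPochInf a q)) :=
  (multipliable_one_sub_mul_pow a hq).hasProd.tendsto_prod_nat

lemma qPoch_succ (a q : ℂ) (n : ℕ) : qPoch a q (n + 1) = qPoch a q n * (1 - a * q ^ n) :=
  prod_range_succ _ n

lemma qPoch_mul_qPochInf (a : ℂ) (hq : ‖q‖ < 1) (n : ℕ) :
    qPoch a q n * qPochInf (a * q ^ n) q = qPochInf a q := by
  have hmul : Multipliable fun j => 1 - a * q ^ (j + n) :=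
    (multipliable_one_sub_mul_pow (a * q ^ n) hq).congr fun j => by ring
  rw [qPoch, qPochInf, qPochInf, ← hmul.prod_mul_tprod_nat_mul' (f := fun j => 1 - a * q ^ j)]
  exact congrArg _ (tprod_congr fun j => by ring)

lemma qPochInf_eq_one_sub_mul (a : ℂ) (hq : ‖q‖ < 1) :
    qPochInf a q = (1 - a) * qPochInf (a * q) q := by
  simpa [qPoch] using (qPoch_mul_qPochInf a hq 1).symm

lemma qPoch_ne_zero (ha : ∀ j, a * q ^ j ≠ 1) (n : ℕ) : qPoch a q n ≠ 0 :=
  prod_ne_zero_iff.2 fun j _ => sub_ne_zero.2 (ha j).symm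

lemma qPochInf_ne_zero (hq : ‖q‖ < 1) (ha : ∀ j, a * q ^ j ≠ 1) : qPochInf a q ≠ 0 := by
  simpa only [qPochInf, sub_eq_add_neg] using
    tprod_one_add_ne_zero_of_summable (f := fun j => -(a * q ^ j))
      (fun j => by simpa only [← sub_eq_add_neg] using sub_ne_zero.2 (ha j).symm)
      (by simpa only [norm_neg] using summable_norm_mul_pow a hq)

lemma tendsto_qPochInf_mul_pow (hq : ‖q‖ < 1) (ha : ∀ j, a * q ^ j ≠ 1) :
    Tendsto (fun n => qPochInf (a * q ^ n) q) atTop (𝓝 1) := by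
  have hinf := qPochInf_ne_zero hq ha
  have htail : (fun n => qPochInf (a * q ^ n) q) = fun n => qPochInf a q / qPoch a q n :=
    funext fun n => by
      rw [eq_div_iff (qPoch_ne_zero ha n), mul_comm, qPoch_mul_qPochInf a hq]
  rw [htail, ← div_self hinf]
  exact tendsto_const_nhds.div (tendsto_qPoch a hq) hinf

end QPochhammer

lemma summable_norm_pow_mul_of_tendsto {𝕜 : Type*} [NormedField 𝕜] {r : 𝕜} (hr : ‖r‖ < 1)
    {c : ℕ → 𝕜} {L : 𝕜} (hc : Tendsto c atTop (𝓝 L)) : Summable fun n => ‖r ^ n * c n‖ := by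
  obtain ⟨M, hM⟩ := isBounded_iff_forall_norm_le.1 (Metric.isBounded_range_of_tendsto c hc)
  refine .of_nonneg_of_le (fun _ => norm_nonneg _) (fun n => ?_)
    ((summable_geometric_of_lt_one (norm_nonneg r) hr).mul_right M)
  rw [norm_mul, norm_pow]
  exact mul_le_mul_of_nonneg_left (hM _ ⟨n, rfl⟩) (by positivity)

lemma hasSum_sub_succ_of_tendsto {E : Type*} [NormedAddCommGroup E] {e : ℕ → E} {L : E}
    (hs : Summable fun n => ‖e n - e (n + 1)‖) (he : Tendsto e atTop (𝓝 L)) :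
    HasSum (fun n => e n - e (n + 1)) (e 0 - L) := by
  refine (hasSum_iff_tendsto_nat_of_summable_norm hs).2 ?_
  simp_rw [sum_range_sub']
  exact tendsto_const_nhds.sub he

noncomputable def summandCoeff (q : ℂ) (n : ℕ) : ℂ :=
  qPochInf (q ^ (4 * n + 4)) (q ^ 4) * qPoch q q (2 * n)

section SummandCoeff

variable {q : ℂ}

lemma summandCoeff_zero (q : ℂ) : summandCoeff q 0 = qPochInf (q ^ 4) (q ^ 4) := by
  simp [summandCoeff, qPoch]

lemma one_add_pow_mul_summandCoeff_succ (hq : ‖q‖ < 1) (n : ℕ) :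
    (1 + q ^ (2 * n + 2)) * summandCoeff q (n + 1) = (1 - q ^ (2 * n + 1)) * summandCoeff q n := by
  have hq4 : ‖q ^ 4‖ < 1 := by rw [norm_pow]; exact pow_lt_one₀ (norm_nonneg q) hq four_ne_zero
  simp only [summandCoeff, qPochInf_eq_one_sub_mul (q ^ (4 * n + 4)) hq4,
    show 2 * (n + 1) = 2 * n + 1 + 1 by ring, qPoch_succ]
  ring_nf

lemma tendsto_summandCoeff (hq : ‖q‖ < 1) :
    Tendsto (summandCoeff q) atTop (𝓝 (qPochInf q q)) := by
  have hq4 : ‖q ^ 4‖ < 1 := by rw [norm_pow]; exact pow_lt_one₀ (norm_nonneg q) hq four_ne_zero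
  have hne : ∀ j, q ^ 4 * (q ^ 4) ^ j ≠ 1 := fun j h => by
    rw [← pow_succ'] at h
    exact (pow_lt_one₀ (norm_nonneg _) hq4 j.succ_ne_zero).ne (by rw [← norm_pow, h, norm_one])
  have htail := tendsto_qPochInf_mul_pow hq4 hne
  have hpoch := (tendsto_qPoch q hq).comp (tendsto_id.const_mul_atTop' two_pos)
  rw [← one_mul (qPochInf q q)]
  refine (htail.mul hpoch).congr fun n => ?_
  rw [summandCoeff, Function.comp_apply, ← pow_mul, ← pow_add, add_comm 4]
  rfl

lemma hasSum_one_add_mul_pow_mul_summandCoeff (hq : ‖q‖ < 1) :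
    HasSum (fun n => (1 + q) * (q ^ (2 * n) * summandCoeff q n))
      (2 * qPochInf (q ^ 4) (q ^ 4) - qPochInf q q) := by
  set e : ℕ → ℂ := fun n => (1 + q ^ (2 * n)) * summandCoeff q n
  have hstep (n : ℕ) : e n - e (n + 1) = (1 + q) * (q ^ (2 * n) * summandCoeff q n) := by
    linear_combination -(one_add_pow_mul_summandCoeff_succ hq n)
  have hq2 : ‖q ^ 2‖ < 1 := by rw [norm_pow]; exact pow_lt_one₀ (norm_nonneg q) hq two_ne_zero
  have hpow : Tendsto (fun n => q ^ (2 * n)) atTop (𝓝 0) := by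
    simpa only [pow_mul] using tendsto_pow_atTop_nhds_zero_of_norm_lt_one hq2
  have hcoeff := tendsto_summandCoeff hq
  have he : Tendsto e atTop (𝓝 (qPochInf q q)) := by
    simpa only [add_zero, one_mul] using
      ((tendsto_const_nhds (x := (1 : ℂ))).add hpow).mul hcoeff
  have hsummable : Summable fun n => ‖e n - e (n + 1)‖ :=
    (summable_norm_pow_mul_of_tendsto hq2 (hcoeff.const_mul (1 + q))).congr fun n => by
      rw [hstep, pow_mul]
      ring_nf
  have he0 : e 0 = 2 * qPochInf (q ^ 4) (q ^ 4) := by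
    show (1 + q ^ (2 * 0)) * summandCoeff q 0 = _
    rw [summandCoeff_zero]
    ring
  simpa only [hstep, he0] using hasSum_sub_succ_of_tendsto hsummable he

end SummandCoeff

theorem stmt_0 (q : ℂ) (hq : ‖q‖ < 1) :
    ∑' n : ℕ, q ^ (2 * n) * qPochInf (q ^ (4 * n + 4)) (q ^ 4) * qPoch q q (2 * n) =
      2 * qPochInf (q ^ 4) (q ^ 4) / (1 + q) - qPochInf q q / (1 + q) := by
  have h1q : 1 + q ≠ 0 := fun h => by
    rw [show q = -1 by linear_combination h, norm_neg, norm_one] at hq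
    exact lt_irrefl 1 hq
  have hsum := hasSum_one_add_mul_pow_mul_summandCoeff hq
  rw [← mul_div_cancel₀ (2 * qPochInf (q ^ 4) (q ^ 4) - qPochInf q q) h1q,
    hasSum_mul_left_iff h1q] at hsum
  simpa only [summandCoeff, mul_assoc, sub_div] using hsum.tsum_eq
end

section
/- For every positive integer n, DE1(n) + DE1(n−1) equals the number of 4-regular partitions of n, i.e. the number of partitions of n into parts none of which is divisible by 4. -/
/-!
Splitting by the parity of the largest part, the partitions of `n` in which no even part is
repeated are counted by `DE1 n` (largest part odd) plus those whose largest part `M` is even.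
Such an `M` occurs only once, so lowering it to the odd part `M - 1` is a bijection onto the
partitions of `n - 1` counted by `DE1 (n - 1)`. The partitions with no repeated even part are in
turn equinumerous with the 4-regular ones, as the generating functions agree:
`(1 + q^(2k)) = (1 - q^(4k)) / (1 - q^(2k))`.
-/

/-- `DE1 n` is the number of partitions of `n` in which no even part is repeated
and the largest part is odd. -/
noncomputable def DE1 (n : ℕ) : ℕ :=
  Nat.card {p : n.Partition //
    (∀ k ∈ p.parts, Even k → p.parts.count k = 1) ∧
    ∃ k ∈ p.parts, Odd k ∧ ∀ j ∈ p.parts, j ≤ k}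

/-- `DE2 n` is the number of partitions of `n` in which no even part is repeated,
the largest part is odd and appears at least twice. -/
noncomputable def DE2 (n : ℕ) : ℕ :=
  Nat.card {p : n.Partition //
    (∀ k ∈ p.parts, Even k → p.parts.count k = 1) ∧
    ∃ k ∈ p.parts, Odd k ∧ 2 ≤ p.parts.count k ∧ ∀ j ∈ p.parts, j ≤ k}

/-- `DE3 n` is the number of partitions of `n` in which no even part is repeated,
the largest part is odd and appears exactly once. -/
noncomputable def DE3 (n : ℕ) : ℕ :=
  Nat.card {p : n.Partition //
    (∀ k ∈ p.parts, Even k → p.parts.count k = 1) ∧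
    ∃ k ∈ p.parts, Odd k ∧ p.parts.count k = 1 ∧ ∀ j ∈ p.parts, j ≤ k}

open Finset PowerSeries PowerSeries.WithPiTopology

namespace Multiset

-- An `abbrev`, so that `Finset.filter` by it finds a `Decidable` instance.
abbrev EvenPartsDistinct (s : Multiset ℕ) : Prop :=
  ∀ k ∈ s, Even k → s.count k = 1

theorem EvenPartsDistinct.cons_erase {s : Multiset ℕ} (hs : s.EvenPartsDistinct) (a : ℕ)
    {b : ℕ} (hb : Even b → b ∉ s) : (b ::ₘ s.erase a).EvenPartsDistinct := by
  intro k hk hke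
  rcases eq_or_ne k b with rfl | hkb
  · rw [count_cons_self, count_eq_zero.2 fun h ↦ hb hke (mem_of_mem_erase h)]
  · have hks : k ∈ s.erase a := (mem_cons.1 hk).resolve_left hkb
    have hle := count_le_of_le k (erase_le a s)
    have hpos := count_pos.2 hks
    rw [count_cons_of_ne hkb]
    have := hs k (mem_of_mem_erase hks) hke
    omega

theorem sup_mem_of_ne_zero {s : Multiset ℕ} (hs : s ≠ 0) : s.sup ∈ s := by
  obtain ⟨y, hy, hmax⟩ := s.exists_max_image id hs
  rwa [le_antisymm (sup_le.2 hmax) (le_sup hy)]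

theorem sup_mem_of_odd {s : Multiset ℕ} (h : Odd s.sup) : s.sup ∈ s :=
  sup_mem_of_ne_zero fun hs ↦ by simp [hs] at h

theorem exists_odd_max_iff (s : Multiset ℕ) :
    (∃ k ∈ s, Odd k ∧ ∀ j ∈ s, j ≤ k) ↔ Odd s.sup := by
  constructor
  · rintro ⟨k, hk, hodd, hmax⟩
    rwa [le_antisymm (sup_le.2 hmax) (le_sup hk)]
  · exact fun h ↦ ⟨s.sup, sup_mem_of_odd h, h, fun _ ↦ le_sup⟩

def replaceMax (s : Multiset ℕ) (b : ℕ) : Multiset ℕ :=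
  b ::ₘ s.erase s.sup

variable {s : Multiset ℕ} {b : ℕ}

theorem sum_replaceMax (hs : s.sup ∈ s) : (s.replaceMax b).sum + s.sup = s.sum + b := by
  conv_rhs => rw [← cons_erase hs, sum_cons]
  rw [replaceMax, sum_cons]
  ring

theorem sup_replaceMax (h : ∀ x ∈ s.erase s.sup, x ≤ b) : (s.replaceMax b).sup = b := by
  rw [replaceMax, sup_cons, sup_eq_left]
  exact sup_le.2 h

theorem replaceMax_replaceMax (hs : s.sup ∈ s) (h : (s.replaceMax b).sup = b) :
    (s.replaceMax b).replaceMax s.sup = s := by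
  rw [replaceMax, h, replaceMax, erase_cons_head, cons_erase hs]

theorem sup_replaceMax_sup_add_one : (s.replaceMax (s.sup + 1)).sup = s.sup + 1 :=
  sup_replaceMax fun _ hx ↦ (le_sup (mem_of_mem_erase hx)).trans (Nat.le_succ _)

theorem EvenPartsDistinct.sup_replaceMax_sup_sub_one (hs : s.EvenPartsDistinct)
    (hmem : s.sup ∈ s) (heven : Even s.sup) : (s.replaceMax (s.sup - 1)).sup = s.sup - 1 := by
  refine sup_replaceMax fun x hx ↦ ?_
  have hle : x ≤ s.sup := le_sup (mem_of_mem_erase hx)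
  have hne : x ≠ s.sup := by
    rintro rfl
    have := count_pos.2 hx
    rw [count_erase_self, hs _ hmem heven] at this
    omega
  omega

end Multiset

namespace Nat.Partition

def evenDistincts (n : ℕ) : Finset n.Partition :=
  univ.filter fun p ↦ p.parts.EvenPartsDistinct

section GeneratingFunction

theorem hasProd_powerSeriesMk_card_evenDistincts (R : Type*) [CommSemiring R]
    [TopologicalSpace R] [T2Space R] [IsTopologicalSemiring R] :
    HasProd (fun i ↦ if Even (i + 1) then 1 + X ^ (i + 1) else ∑' j : ℕ, X ^ ((i + 1) * j))
      (PowerSeries.mk fun n ↦ (#(evenDistincts n) : R)) := by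
  convert! hasProd_genFun (fun i c ↦ if Even i → c = 1 then (1 : R) else 0) using 1
  · ext1 i
    split_ifs with hi
    · rw [tsum_eq_single 0 fun j hj ↦ by simp [hi, hj]]
      simp
    · rw [tsum_eq_zero_add' ?_]
      · simp only [hi, false_implies, ite_true, one_smul, mul_zero, pow_zero]
      simp_rw [pow_mul, pow_add]
      apply Summable.mul_right
      exact summable_pow_of_constantCoeff_eq_zero (by simp)
  · simp_rw [genFun, evenDistincts, Multiset.EvenPartsDistinct, card_filter, Finsupp.prod,
      prod_boole]
    simp

variable {R : Type*} [CommRing R] [TopologicalSpace R] [T2Space R] [IsTopologicalRing R]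

theorem tprod_restricted_not_dvd_mul_tprod_one_sub_X_pow (m : ℕ) :
    (∏' i, if ¬ m ∣ i + 1 then ∑' j, (X : R⟦X⟧) ^ ((i + 1) * j) else 1) *
      ∏' i, (1 - X ^ (i + 1)) = ∏' i, if m ∣ i + 1 then 1 - X ^ (i + 1) else 1 := by
  rw [← (multipliable_powerSeriesMk_card_restricted R (¬ m ∣ ·)).tprod_mul
    (multipliable_one_sub_X_pow R)]
  refine tprod_congr fun i ↦ ?_
  split_ifs
  · exact one_mul _
  · simp_rw [pow_mul]
    exact tsum_pow_mul_one_sub_of_constantCoeff_eq_zero (by simp)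

theorem tprod_evenDistincts_mul_tprod_one_sub_X_pow :
    (∏' i, if Even (i + 1) then 1 + X ^ (i + 1) else ∑' j, (X : R⟦X⟧) ^ ((i + 1) * j)) *
      ∏' i, (1 - X ^ (i + 1)) = ∏' i, if Even (i + 1) then 1 - X ^ (2 * (i + 1)) else 1 := by
  rw [← (hasProd_powerSeriesMk_card_evenDistincts R).multipliable.tprod_mul
    (multipliable_one_sub_X_pow R)]
  refine tprod_congr fun i ↦ ?_
  split_ifs
  · ring
  · simp_rw [pow_mul]
    exact tsum_pow_mul_one_sub_of_constantCoeff_eq_zero (by simp)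

end GeneratingFunction

theorem tprod_ite_even_eq_tprod_ite_four_dvd {M : Type*} [CommMonoid M] [TopologicalSpace M]
    (f : ℕ → M) :
    ∏' i, (if Even (i + 1) then f (2 * (i + 1)) else 1) =
      ∏' i, if 4 ∣ i + 1 then f (i + 1) else 1 := by
  have hinj : Function.Injective fun i : ℕ ↦ 2 * i + 1 := fun a b h ↦ by simpa using h
  rw [← hinj.tprod_eq (f := fun j ↦ if 4 ∣ j + 1 then f (j + 1) else 1)]
  · refine tprod_congr fun i ↦ ?_
    have : 4 ∣ 2 * (i + 1) ↔ Even (i + 1) := by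
      rw [even_iff_two_dvd]; omega
    rw [show 2 * i + 1 + 1 = 2 * (i + 1) by ring]
    simp only [this]
  · intro j hj
    have : 4 ∣ j + 1 := by by_contra h; simp [h] at hj
    exact ⟨j / 2, by simp only; omega⟩

theorem card_evenDistincts_eq_card_restricted (n : ℕ) :
    #(evenDistincts n) = #(restricted n (¬ 4 ∣ ·)) := by
  suffices (PowerSeries.mk fun n ↦ (#(evenDistincts n) : ℤ)) =
      PowerSeries.mk fun n ↦ (#(restricted n (¬ 4 ∣ ·)) : ℤ) by
    simpa using PowerSeries.ext_iff.mp this n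
  rw [powerSeriesMk_card_restricted_eq_tprod ℤ (¬ 4 ∣ ·),
    ← (hasProd_powerSeriesMk_card_evenDistincts ℤ).tprod_eq]
  apply mul_right_cancel₀ (tprod_one_sub_X_pow_ne_zero ℤ)
  rw [tprod_evenDistincts_mul_tprod_one_sub_X_pow,
    tprod_restricted_not_dvd_mul_tprod_one_sub_X_pow,
    tprod_ite_even_eq_tprod_ite_four_dvd (fun k ↦ 1 - X ^ k)]

section LargestPart

variable {n : ℕ}

theorem sup_parts_mem (p : (n + 1).Partition) : p.parts.sup ∈ p.parts :=
  Multiset.sup_mem_of_ne_zero fun h ↦ by simpa [h] using p.parts_sum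

def replaceLargestPart {m : ℕ} (p : n.Partition) (b : ℕ) (hb : 0 < b)
    (hp : p.parts.sup ∈ p.parts) (hm : n + b = m + p.parts.sup) : m.Partition where
  parts := p.parts.replaceMax b
  parts_pos {i} hi := by
    rcases Multiset.mem_cons.1 hi with rfl | hi
    · exact hb
    · exact p.parts_pos (Multiset.mem_of_mem_erase hi)
  parts_sum := by
    have := Multiset.sum_replaceMax (b := b) hp
    rw [p.parts_sum] at this
    omega

def lowerEvenLargestPartEquiv :
    {p : (n + 1).Partition // p.parts.EvenPartsDistinct ∧ Even p.parts.sup} ≃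
      {q : n.Partition // q.parts.EvenPartsDistinct ∧ Odd q.parts.sup} where
  toFun p :=
    have hmem := sup_parts_mem p.1
    have htwo : 2 ≤ p.1.parts.sup := by
      obtain ⟨r, hr⟩ := p.2.2
      have := p.1.parts_pos hmem
      omega
    have hodd : Odd (p.1.parts.sup - 1) := Nat.Even.sub_odd (by omega) p.2.2 odd_one
    ⟨replaceLargestPart p.1 (p.1.parts.sup - 1) (by omega) hmem (by omega),
      p.2.1.cons_erase _ fun heven ↦ absurd heven (Nat.not_even_iff_odd.2 hodd),
      by rwa [replaceLargestPart, p.2.1.sup_replaceMax_sup_sub_one hmem p.2.2]⟩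
  invFun q :=
    ⟨replaceLargestPart q.1 (q.1.parts.sup + 1) (by omega) (Multiset.sup_mem_of_odd q.2.2)
        (by omega),
      q.2.1.cons_erase _ fun _ h ↦ absurd (Multiset.le_sup h) (by omega),
      by rw [replaceLargestPart, Multiset.sup_replaceMax_sup_add_one]; exact q.2.2.add_one⟩
  left_inv p := by
    have hmem := sup_parts_mem p.1
    have hsup := p.2.1.sup_replaceMax_sup_sub_one hmem p.2.2
    refine Subtype.ext (Partition.ext ?_)
    change (p.1.parts.replaceMax _).replaceMax ((p.1.parts.replaceMax _).sup + 1) = _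
    rw [hsup, Nat.sub_add_cancel (p.1.parts_pos hmem), Multiset.replaceMax_replaceMax hmem hsup]
  right_inv q := by
    refine Subtype.ext (Partition.ext ?_)
    change (q.1.parts.replaceMax _).replaceMax ((q.1.parts.replaceMax _).sup - 1) = _
    rw [Multiset.sup_replaceMax_sup_add_one, Nat.add_sub_cancel,
      Multiset.replaceMax_replaceMax (Multiset.sup_mem_of_odd q.2.2)
        Multiset.sup_replaceMax_sup_add_one]

theorem card_evenDistincts_succ (n : ℕ) : #(evenDistincts (n + 1)) = DE1 (n + 1) + DE1 n := by
  have hDE1 (m : ℕ) : DE1 m =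
      #(univ.filter fun p : m.Partition ↦ p.parts.EvenPartsDistinct ∧ Odd p.parts.sup) := by
    rw [DE1, ← Fintype.card_subtype, ← Nat.card_eq_fintype_card]
    exact Nat.card_congr (Equiv.subtypeEquivRight fun p ↦
      and_congr_right fun _ ↦ Multiset.exists_odd_max_iff p.parts)
  have hshift :
      #(univ.filter fun p : (n + 1).Partition ↦ p.parts.EvenPartsDistinct ∧ Even p.parts.sup) =
        DE1 n := by
    rw [hDE1, ← Fintype.card_subtype, ← Fintype.card_subtype]
    exact Fintype.card_congr lowerEvenLargestPartEquiv
  rw [hDE1, ← hshift, evenDistincts,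
    ← card_filter_add_card_filter_not (fun p ↦ Odd p.parts.sup), filter_filter, filter_filter]
  simp only [Nat.not_odd_iff_even]

end LargestPart

end Nat.Partition

theorem stmt_6 (n : ℕ) (hn : 0 < n) :
    DE1 n + DE1 (n - 1) =
      Nat.card {p : n.Partition // ∀ k ∈ p.parts, ¬ (4 ∣ k)} := by
  obtain ⟨n, rfl⟩ := Nat.exists_eq_succ_of_ne_zero hn.ne'
  rw [Nat.succ_sub_one, ← Nat.Partition.card_evenDistincts_succ,
    Nat.Partition.card_evenDistincts_eq_card_restricted, Nat.Partition.restricted,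
    Nat.card_eq_fintype_card, Fintype.card_subtype]
end

section
/- For every integer n > 1, DE3(n+2) + DE3(n−1) equals the number of 4-regular partitions of n, i.e. the number of partitions of n into parts none of which is divisible by 4. -/
/-!
Removing 2 from the largest part of a partition counted by `DE3 (n + 2)`, or adding 1 to the
largest part of one counted by `DE3 (n - 1)`, yields a partition of `n` whose even parts are
distinct. Every such partition arises exactly once: it comes from `DE3 (n + 2)` when its largest
part exceeds its largest odd part by at most one, and from `DE3 (n - 1)` otherwise.

Partitions of `n` with distinct even parts are equinumerous with the 4-regular ones, as both
generating functions, multiplied by `∏ (1 - X ^ i)`, become `∏ (1 - X ^ (4 * i))`; on the first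
side the factor of an even `i` is `(1 + X ^ i) * (1 - X ^ i) = 1 - X ^ (2 * i)`.
-/

open PowerSeries PowerSeries.WithPiTopology

theorem Multiset.sup_cons_of_forall_le {α : Type*} [SemilatticeSup α] [OrderBot α] {a : α}
    {s : Multiset α} (h : ∀ b ∈ s, b ≤ a) : (a ::ₘ s).sup = a := by
  rw [Multiset.sup_cons, sup_eq_left.2 (Multiset.sup_le.2 h)]

theorem Multiset.exists_eq_cons_forall_le {α : Type*} [LinearOrder α] {s : Multiset α}
    (hs : s ≠ 0) : ∃ a r, s = a ::ₘ r ∧ ∀ b ∈ r, b ≤ a := by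
  obtain ⟨a, ha, hmax⟩ := s.exists_max_image id hs
  exact ⟨a, s.erase a, (Multiset.cons_erase ha).symm,
    fun b hb ↦ hmax b (Multiset.mem_of_mem_erase hb)⟩

theorem tprod_ite_eq_tprod_comp {α M : Type*} [CommMonoid M] [TopologicalSpace M]
    {P : α → Prop} [DecidablePred P] {F : α → M} {g : ℕ → α} (hg : g.Injective)
    (hP : ∀ a, P a ↔ a ∈ Set.range g) :
    ∏' a, (if P a then F a else 1) = ∏' k, F (g k) := by
  rw [← hg.tprod_eq]
  · simp [hP]
  · intro a ha
    by_contra h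
    exact ha (by simp [hP, h])

theorem Nat.Partition.coeff_genFun_boole (P : ℕ → ℕ → Prop) [∀ i c, Decidable (P i c)]
    (n : ℕ) :
    coeff n (genFun fun i c ↦ if P i c then (1 : ℤ) else 0) =
      Nat.card {p : n.Partition // ∀ i ∈ p.parts, P i (p.parts.count i)} := by
  rw [Nat.card_eq_fintype_card, Fintype.card_subtype]
  simp_rw [coeff_genFun, Finset.card_filter, Finsupp.prod, Finset.prod_boole]
  simp

section GeneratingFunctions

variable {R : Type*} [CommRing R] [TopologicalSpace R] [IsTopologicalRing R] [T2Space R]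

theorem PowerSeries.one_add_tsum_X_pow_mul_one_sub (i : ℕ) :
    (1 + ∑' j, (X : R⟦X⟧) ^ ((i + 1) * (j + 1))) * (1 - X ^ (i + 1)) = 1 := by
  have h : ((X : R⟦X⟧) ^ (i + 1)).constantCoeff = 0 := by simp
  simp_rw [pow_mul]
  rw [← pow_zero (X ^ (i + 1)), ← (summable_pow_of_constantCoeff_eq_zero h).tsum_eq_zero_add]
  exact tsum_pow_mul_one_sub_of_constantCoeff_eq_zero h

theorem Nat.Partition.genFun_mul_tprod_one_sub_X_pow (f : ℕ → ℕ → R) :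
    genFun f * ∏' i, (1 - X ^ (i + 1)) =
      ∏' i, (1 + ∑' j, C (f (i + 1) (j + 1)) * X ^ ((i + 1) * (j + 1))) *
        (1 - X ^ (i + 1)) := by
  rw [genFun_eq_tprod, ← (multipliable_genFun f).tprod_mul (multipliable_one_sub_X_pow R)]
  simp_rw [smul_eq_C_mul]

theorem genFun_evenDistinct_mul_tprod_one_sub_X_pow :
    Nat.Partition.genFun (fun i c ↦ if Even i → c = 1 then (1 : R) else 0) *
        ∏' i, (1 - X ^ (i + 1)) = ∏' k, (1 - X ^ (4 * (k + 1))) := by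
  rw [Nat.Partition.genFun_mul_tprod_one_sub_X_pow]
  calc _ = ∏' i, if Even (i + 1) then 1 - (X : R⟦X⟧) ^ (2 * (i + 1)) else 1 := by
        refine tprod_congr fun i ↦ ?_
        split_ifs with h
        · rw [tsum_eq_single 0 fun j hj ↦ by simp [h, hj]]
          simp [h]
          ring
        · simpa [h] using one_add_tsum_X_pow_mul_one_sub i
    _ = _ := by
        rw [tprod_ite_eq_tprod_comp (g := fun k ↦ 2 * k + 1)]
        · congr! 3
          ring
        · intro a b h
          simpa using h
        · simp [Nat.even_add_one]

theorem genFun_fourRegular_mul_tprod_one_sub_X_pow :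
    Nat.Partition.genFun (fun i _ ↦ if ¬ 4 ∣ i then (1 : R) else 0) *
        ∏' i, (1 - X ^ (i + 1)) = ∏' k, (1 - X ^ (4 * (k + 1))) := by
  rw [Nat.Partition.genFun_mul_tprod_one_sub_X_pow]
  calc _ = ∏' i, if 4 ∣ i + 1 then 1 - (X : R⟦X⟧) ^ (i + 1) else 1 := by
        refine tprod_congr fun i ↦ ?_
        split_ifs
        · simp
        · simpa using one_add_tsum_X_pow_mul_one_sub i
    _ = _ := by
        rw [tprod_ite_eq_tprod_comp (g := fun k ↦ 4 * k + 3)]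
        · rfl
        · intro a b h
          simpa using h
        · intro i
          constructor
          · rintro ⟨c, hc⟩
            exact ⟨c - 1, by dsimp only; omega⟩
          · rintro ⟨k, rfl⟩
            exact ⟨k + 1, by ring⟩

end GeneratingFunctions

def EvenDistinct (s : Multiset ℕ) : Prop := ∀ k ∈ s, Even k → s.count k = 1

theorem card_evenDistinct_eq_card_fourRegular (n : ℕ) :
    Nat.card {p : n.Partition // EvenDistinct p.parts} =
      Nat.card {p : n.Partition // ∀ i ∈ p.parts, ¬ 4 ∣ i} := by
  have hgen := mul_right_cancel₀ (tprod_one_sub_X_pow_ne_zero ℤ)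
    (genFun_evenDistinct_mul_tprod_one_sub_X_pow.trans
      genFun_fourRegular_mul_tprod_one_sub_X_pow.symm)
  have := congrArg (coeff n) hgen
  rw [Nat.Partition.coeff_genFun_boole, Nat.Partition.coeff_genFun_boole] at this
  exact_mod_cast this

def partitionsWith (N : ℕ) (P : Multiset ℕ → Prop) : Set (Multiset ℕ) :=
  {s | (∀ i ∈ s, 0 < i) ∧ s.sum = N ∧ P s}

theorem card_partition_subtype_eq_ncard (N : ℕ) (P : Multiset ℕ → Prop) :
    Nat.card {p : N.Partition // P p.parts} = (partitionsWith N P).ncard := by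
  rw [← Nat.card_coe_set_eq]
  exact Nat.card_congr
    { toFun p := ⟨p.1.parts, fun _ ↦ p.1.parts_pos, p.1.parts_sum, p.2⟩
      invFun s := ⟨⟨s.1, s.2.1 _, s.2.2.1⟩, s.2.2.2⟩
      left_inv _ := rfl
      right_inv _ := rfl }

theorem finite_partitionsWith (N : ℕ) (P : Multiset ℕ → Prop) : (partitionsWith N P).Finite :=
  (Set.finite_range Nat.Partition.parts).subset fun s hs ↦ ⟨⟨s, hs.1 _, hs.2.1⟩, rfl⟩

def OddSimpleTop (s : Multiset ℕ) : Prop :=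
  ∃ k ∈ s, Odd k ∧ s.count k = 1 ∧ ∀ j ∈ s, j ≤ k

theorem evenDistinct_cons {b : ℕ} {r : Multiset ℕ} :
    EvenDistinct (b ::ₘ r) ↔ EvenDistinct r ∧ (Even b → b ∉ r) := by
  simp only [EvenDistinct, Multiset.mem_cons, Multiset.count_cons]
  constructor
  · intro h
    refine ⟨fun k hk hke ↦ ?_, fun hb hbr ↦ ?_⟩
    · have h1 := h k (.inr hk) hke
      have h2 := Multiset.count_pos.2 hk
      split_ifs at h1 <;> omega
    · have h1 := h b (.inl rfl) hb
      have h2 := Multiset.count_pos.2 hbr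
      rw [if_pos rfl] at h1
      omega
  · rintro ⟨h, hb⟩ k (rfl | hk) hke
    · simp [Multiset.count_eq_zero.2 (hb hke)]
    · rw [h k hk hke, if_neg]
      rintro rfl
      exact hb hke hk

theorem evenDistinct_cons_of_odd {b : ℕ} {r : Multiset ℕ} (hb : Odd b) :
    EvenDistinct (b ::ₘ r) ↔ EvenDistinct r :=
  evenDistinct_cons.trans <| and_iff_left fun h ↦ (Nat.not_even_iff_odd.2 hb h).elim

theorem oddSimpleTop_iff {s : Multiset ℕ} :
    OddSimpleTop s ↔ ∃ k r, s = k ::ₘ r ∧ Odd k ∧ ∀ j ∈ r, j < k := by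
  constructor
  · rintro ⟨k, hk, hodd, hcount, hmax⟩
    refine ⟨k, s.erase k, (Multiset.cons_erase hk).symm, hodd, fun j hj ↦ ?_⟩
    refine (hmax j (Multiset.mem_of_mem_erase hj)).lt_of_ne ?_
    rintro rfl
    rw [← Multiset.count_pos, Multiset.count_erase_self] at hj
    omega
  · rintro ⟨k, r, rfl, hodd, hlt⟩
    refine ⟨k, Multiset.mem_cons_self _ _, hodd, ?_, ?_⟩
    · rw [Multiset.count_cons_self, Multiset.count_eq_zero.2 fun h ↦ (hlt k h).false]
    · intro j hj
      rcases Multiset.mem_cons.1 hj with rfl | hj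
      exacts [le_rfl, (hlt j hj).le]

theorem cons_mem_partitionsWith_iff {N b : ℕ} {r : Multiset ℕ} {P : Multiset ℕ → Prop} :
    b ::ₘ r ∈ partitionsWith N P ↔
      0 < b ∧ (∀ i ∈ r, 0 < i) ∧ b + r.sum = N ∧ P (b ::ₘ r) := by
  simp [partitionsWith, and_assoc]

theorem mem_partitionsWith_oddSimpleTop_iff {N : ℕ} {s : Multiset ℕ} :
    s ∈ partitionsWith N (fun s ↦ EvenDistinct s ∧ OddSimpleTop s) ↔
      ∃ k r, s = k ::ₘ r ∧ Odd k ∧ (∀ j ∈ r, 0 < j ∧ j < k) ∧ EvenDistinct r ∧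
        k + r.sum = N := by
  constructor
  · intro hs
    obtain ⟨k, r, rfl, hk, hlt⟩ := oddSimpleTop_iff.1 hs.2.2.2
    obtain ⟨-, hpos, hsum, hed, -⟩ := cons_mem_partitionsWith_iff.1 hs
    exact ⟨k, r, rfl, hk, fun j hj ↦ ⟨hpos j hj, hlt j hj⟩,
      (evenDistinct_cons_of_odd hk).1 hed, hsum⟩
  · rintro ⟨k, r, rfl, hk, hr, hed, hsum⟩
    exact cons_mem_partitionsWith_iff.2 ⟨hk.pos, fun j hj ↦ (hr j hj).1, hsum,
      (evenDistinct_cons_of_odd hk).2 hed,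
      oddSimpleTop_iff.2 ⟨k, r, rfl, hk, fun j hj ↦ (hr j hj).2⟩⟩

/-- The largest odd number `≤ m`, for `m ≥ 1`. -/
def oddFloor (m : ℕ) : ℕ := 2 * ((m - 1) / 2) + 1

theorem oddFloor_sup_cons {o : ℕ} {r : Multiset ℕ} (ho : Odd o)
    (hr : ∀ j ∈ r, j ≤ o + 1) :
    oddFloor (o ::ₘ r).sup = o := by
  have hle : o ≤ (o ::ₘ r).sup := Multiset.le_sup (Multiset.mem_cons_self o r)
  have hge : (o ::ₘ r).sup ≤ o + 1 :=
    Multiset.sup_le.2 fun j hj ↦ (Multiset.mem_cons.1 hj).elim (fun h ↦ h ▸ o.le_succ) (hr j)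
  obtain ⟨a, rfl⟩ := ho
  unfold oddFloor
  omega

theorem mem_partitionsWith_inter_oddFloor_mem_iff {N : ℕ} {t : Multiset ℕ} :
    t ∈ partitionsWith N EvenDistinct ∩ {t | oddFloor t.sup ∈ t} ↔
      ∃ o r, t = o ::ₘ r ∧ Odd o ∧ (∀ j ∈ r, 0 < j ∧ j ≤ o + 1) ∧
        EvenDistinct r ∧ o + r.sum = N := by
  constructor
  · rintro ⟨ht, hmem⟩
    have ho : Odd (oddFloor t.sup) := ⟨_, rfl⟩
    rw [← Multiset.cons_erase hmem] at ht
    obtain ⟨-, hpos, hsum, hed⟩ := cons_mem_partitionsWith_iff.1 ht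
    refine ⟨_, _, (Multiset.cons_erase hmem).symm, ho, fun j hj ↦ ⟨hpos j hj, ?_⟩,
      (evenDistinct_cons_of_odd ho).1 hed, hsum⟩
    have := Multiset.le_sup (Multiset.mem_of_mem_erase hj)
    unfold oddFloor
    omega
  · rintro ⟨o, r, rfl, ho, hr, hed, hsum⟩
    refine ⟨cons_mem_partitionsWith_iff.2 ⟨ho.pos, fun j hj ↦ (hr j hj).1, hsum,
      (evenDistinct_cons_of_odd ho).2 hed⟩, ?_⟩
    rw [Set.mem_ofPred_eq, oddFloor_sup_cons ho fun j hj ↦ (hr j hj).2]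
    exact Multiset.mem_cons_self o r

theorem mem_partitionsWith_diff_oddFloor_mem_iff {N : ℕ} {t : Multiset ℕ} :
    t ∈ partitionsWith (N + 1) EvenDistinct \ {t | oddFloor t.sup ∈ t} ↔
      ∃ m r, t = m ::ₘ r ∧ Even m ∧ 0 < m ∧ (∀ j ∈ r, 0 < j ∧ j + 1 < m) ∧
        EvenDistinct r ∧ m + r.sum = N + 1 := by
  constructor
  · rintro ⟨ht, hnot⟩
    have ht0 : t ≠ 0 := by
      rintro rfl
      simp [partitionsWith] at ht
    obtain ⟨m, r, rfl, hr⟩ := Multiset.exists_eq_cons_forall_le ht0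
    obtain ⟨hm, hpos, hsum, hed⟩ := cons_mem_partitionsWith_iff.1 ht
    rw [Set.mem_ofPred_eq, Multiset.sup_cons_of_forall_le hr] at hnot
    have hme : Even m := by
      refine Nat.not_odd_iff_even.1 fun ⟨a, ha⟩ ↦ hnot ?_
      rw [show oddFloor m = m by unfold oddFloor; omega]
      exact Multiset.mem_cons_self m r
    obtain ⟨hed, hmr⟩ := evenDistinct_cons.1 hed
    refine ⟨m, r, rfl, hme, hm, fun j hj ↦ ⟨hpos j hj, ?_⟩, hed, hsum⟩
    have h1 : j ≠ m := fun h ↦ hmr hme (h ▸ hj)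
    have h2 : j ≠ oddFloor m := fun h ↦ hnot (h ▸ Multiset.mem_cons_of_mem hj)
    have h3 := hr j hj
    obtain ⟨a, rfl⟩ := hme
    unfold oddFloor at h2
    omega
  · rintro ⟨m, r, rfl, hme, hm, hr, hed, hsum⟩
    have hr' (j) (hj : j ∈ r) : j + 1 < m := (hr j hj).2
    refine ⟨cons_mem_partitionsWith_iff.2 ⟨hm, fun j hj ↦ (hr j hj).1, hsum,
      evenDistinct_cons.2 ⟨hed, fun _ h ↦ by have := hr' m h; omega⟩⟩, ?_⟩
    rw [Set.mem_ofPred_eq,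
      Multiset.sup_cons_of_forall_le fun j hj ↦ by have := hr' j hj; omega]
    obtain ⟨a, rfl⟩ := hme
    intro hmem
    rcases Multiset.mem_cons.1 hmem with h | h
    · unfold oddFloor at h
      omega
    · have := hr' _ h
      unfold oddFloor at this
      omega

-- `k = 1` would force `s = {1}`
theorem exists_cons_of_mem_partitionsWith_add_two {N : ℕ} {s : Multiset ℕ}
    (hs : s ∈ partitionsWith (N + 2) fun s ↦ EvenDistinct s ∧ OddSimpleTop s) :
    ∃ k r, s = k ::ₘ r ∧ Odd (k - 2) ∧ 3 ≤ k ∧ (∀ j ∈ r, 0 < j ∧ j < k) ∧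
      EvenDistinct r ∧ k + r.sum = N + 2 := by
  obtain ⟨k, r, rfl, ⟨a, rfl⟩, hr, hed, hsum⟩ := mem_partitionsWith_oddSimpleTop_iff.1 hs
  have hk : 3 ≤ 2 * a + 1 := by
    by_contra h
    rw [Multiset.eq_zero_of_forall_notMem (s := r) fun j hj ↦ by have := hr j hj; omega]
      at hsum
    simp at hsum
    omega
  exact ⟨2 * a + 1, r, rfl, ⟨a - 1, by omega⟩, hk, hr, hed, hsum⟩

def replaceTop (f : ℕ → ℕ) (s : Multiset ℕ) : Multiset ℕ := f s.sup ::ₘ s.erase s.sup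

theorem replaceTop_cons (f : ℕ → ℕ) {k : ℕ} {r : Multiset ℕ} (hr : ∀ j ∈ r, j ≤ k) :
    replaceTop f (k ::ₘ r) = f k ::ₘ r := by
  rw [replaceTop, Multiset.sup_cons_of_forall_le hr, Multiset.erase_cons_head]

theorem bijOn_replaceTop_sub_two (N : ℕ) :
    Set.BijOn (replaceTop (· - 2))
      (partitionsWith (N + 2) fun s ↦ EvenDistinct s ∧ OddSimpleTop s)
      (partitionsWith N EvenDistinct ∩ {t | oddFloor t.sup ∈ t}) := by
  have hinv (o r) (ho : Odd o) (hr : ∀ j ∈ r, j ≤ o + 1) :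
      (oddFloor (o ::ₘ r).sup + 2) ::ₘ (o ::ₘ r).erase (oddFloor (o ::ₘ r).sup) =
        (o + 2) ::ₘ r := by
    rw [oddFloor_sup_cons ho hr, Multiset.erase_cons_head]
  refine Set.InvOn.bijOn (f' := fun t ↦ (oddFloor t.sup + 2) ::ₘ t.erase (oddFloor t.sup))
    ⟨fun s hs ↦ ?_, fun t ht ↦ ?_⟩ (fun s hs ↦ ?_) (fun t ht ↦ ?_)
  · obtain ⟨k, r, rfl, hk, hk3, hr, -, -⟩ := exists_cons_of_mem_partitionsWith_add_two hs
    have hr' (j) (hj : j ∈ r) : j < k := (hr j hj).2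
    dsimp only
    rw [replaceTop_cons _ fun j hj ↦ (hr' j hj).le,
      hinv (k - 2) r hk fun j hj ↦ by have := hr' j hj; omega, Nat.sub_add_cancel (by omega)]
  · obtain ⟨o, r, rfl, ho, hr, -, -⟩ := mem_partitionsWith_inter_oddFloor_mem_iff.1 ht
    have hr' (j) (hj : j ∈ r) : j ≤ o + 1 := (hr j hj).2
    dsimp only
    rw [hinv o r ho hr', replaceTop_cons _ fun j hj ↦ by have := hr' j hj; omega,
      Nat.add_sub_cancel]
  · obtain ⟨k, r, rfl, hk, hk3, hr, hed, hsum⟩ :=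
      exists_cons_of_mem_partitionsWith_add_two hs
    rw [replaceTop_cons _ fun j hj ↦ (hr j hj).2.le]
    exact mem_partitionsWith_inter_oddFloor_mem_iff.2
      ⟨k - 2, r, rfl, hk, fun j hj ↦ by have := hr j hj; omega, hed, by omega⟩
  · obtain ⟨o, r, rfl, ho, hr, hed, hsum⟩ := mem_partitionsWith_inter_oddFloor_mem_iff.1 ht
    dsimp only
    rw [hinv o r ho fun j hj ↦ (hr j hj).2]
    exact mem_partitionsWith_oddSimpleTop_iff.2
      ⟨o + 2, r, rfl, ho.add_even even_two, fun j hj ↦ by have := hr j hj; omega, hed,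
        by omega⟩

theorem bijOn_replaceTop_add_one (N : ℕ) :
    Set.BijOn (replaceTop (· + 1))
      (partitionsWith N fun s ↦ EvenDistinct s ∧ OddSimpleTop s)
      (partitionsWith (N + 1) EvenDistinct \ {t | oddFloor t.sup ∈ t}) := by
  refine Set.InvOn.bijOn (f' := replaceTop (· - 1))
    ⟨fun s hs ↦ ?_, fun t ht ↦ ?_⟩ (fun s hs ↦ ?_) (fun t ht ↦ ?_)
  · obtain ⟨k, r, rfl, -, hr, -, -⟩ := mem_partitionsWith_oddSimpleTop_iff.1 hs
    have hr' (j) (hj : j ∈ r) : j < k := (hr j hj).2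
    rw [replaceTop_cons _ fun j hj ↦ (hr' j hj).le,
      replaceTop_cons _ fun j hj ↦ by have := hr' j hj; omega, Nat.add_sub_cancel]
  · obtain ⟨m, r, rfl, -, hm, hr, -, -⟩ := mem_partitionsWith_diff_oddFloor_mem_iff.1 ht
    have hr' (j) (hj : j ∈ r) : j + 1 < m := (hr j hj).2
    rw [replaceTop_cons _ fun j hj ↦ by have := hr' j hj; omega,
      replaceTop_cons _ fun j hj ↦ by have := hr' j hj; omega, Nat.sub_add_cancel hm]
  · obtain ⟨k, r, rfl, hk, hr, hed, hsum⟩ := mem_partitionsWith_oddSimpleTop_iff.1 hs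
    rw [replaceTop_cons _ fun j hj ↦ (hr j hj).2.le]
    exact mem_partitionsWith_diff_oddFloor_mem_iff.2 ⟨k + 1, r, rfl, hk.add_one, k.succ_pos,
      fun j hj ↦ by have := hr j hj; omega, hed, by omega⟩
  · obtain ⟨m, r, rfl, hme, hm, hr, hed, hsum⟩ := mem_partitionsWith_diff_oddFloor_mem_iff.1 ht
    rw [replaceTop_cons _ fun j hj ↦ by have := hr j hj; omega]
    exact mem_partitionsWith_oddSimpleTop_iff.2 ⟨m - 1, r, rfl, Nat.Even.sub_odd hm hme odd_one,
      fun j hj ↦ by have := hr j hj; omega, hed, by omega⟩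

theorem stmt_8 (n : ℕ) (hn : 1 < n) :
    DE3 (n + 2) + DE3 (n - 1) =
      Nat.card {p : n.Partition // ∀ k ∈ p.parts, ¬ (4 ∣ k)} := by
  obtain ⟨N, rfl⟩ : ∃ N, n = N + 1 := ⟨n - 1, by omega⟩
  have hDE3 (M : ℕ) : DE3 M =
      (partitionsWith M fun s ↦ EvenDistinct s ∧ OddSimpleTop s).ncard :=
    card_partition_subtype_eq_ncard M fun s ↦ EvenDistinct s ∧ OddSimpleTop s
  rw [Nat.add_sub_cancel, hDE3, hDE3, (bijOn_replaceTop_sub_two _).ncard_eq,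
    (bijOn_replaceTop_add_one N).ncard_eq,
    Set.ncard_inter_add_ncard_sdiff_eq_ncard _ _ (finite_partitionsWith _ _),
    ← card_partition_subtype_eq_ncard]
  exact card_evenDistinct_eq_card_fourRegular _
end

section
/- For every integer n > 1, DE3(n+2) + DE3(n−1) = DE1(n) + DE1(n−1). -/
open Multiset

/-- no even part repeated, largest part odd -/
abbrev Good1 (s : Multiset ℕ) : Prop :=
  (∀ k ∈ s, Even k → s.count k = 1) ∧ ∃ k ∈ s, Odd k ∧ ∀ j ∈ s, j ≤ k

abbrev Good2 (s : Multiset ℕ) : Prop :=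
  (∀ k ∈ s, Even k → s.count k = 1) ∧ ∃ k ∈ s, Odd k ∧ 2 ≤ s.count k ∧ ∀ j ∈ s, j ≤ k

abbrev Good3 (s : Multiset ℕ) : Prop :=
  (∀ k ∈ s, Even k → s.count k = 1) ∧ ∃ k ∈ s, Odd k ∧ s.count k = 1 ∧ ∀ j ∈ s, j ≤ k

lemma sup_eq_of {s : Multiset ℕ} {k : ℕ} (hk : k ∈ s) (hmax : ∀ j ∈ s, j ≤ k) :
    s.sup = k :=
  le_antisymm (Multiset.sup_le.2 hmax) (Multiset.le_sup hk)

lemma src3_facts {s : Multiset ℕ} (h : Good3 s) :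
    s.sup ∈ s ∧ Odd s.sup ∧ s.count s.sup = 1 ∧ ∀ j ∈ s, j ≤ s.sup := by
  obtain ⟨he, k, hk, ho, hc, hmax⟩ := h
  have hs : s.sup = k := sup_eq_of hk hmax
  rw [hs]; exact ⟨hk, ho, hc, hmax⟩

lemma src2_facts {s : Multiset ℕ} (h : Good2 s) :
    s.sup ∈ s ∧ Odd s.sup ∧ 2 ≤ s.count s.sup ∧ ∀ j ∈ s, j ≤ s.sup := by
  obtain ⟨he, k, hk, ho, hc, hmax⟩ := h
  have hs : s.sup = k := sup_eq_of hk hmax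
  rw [hs]; exact ⟨hk, ho, hc, hmax⟩

lemma src1_facts {s : Multiset ℕ} (h : Good1 s) :
    s.sup ∈ s ∧ Odd s.sup ∧ ∀ j ∈ s, j ≤ s.sup := by
  obtain ⟨he, k, hk, ho, hmax⟩ := h
  have hs : s.sup = k := sup_eq_of hk hmax
  rw [hs]; exact ⟨hk, ho, hmax⟩

section A

/-- Facts about the map adding 2 to (one copy of) the largest part. -/
lemma upFacts {s : Multiset ℕ} (hpos : ∀ i ∈ s, 0 < i)
    (he : ∀ j ∈ s, Even j → s.count j = 1)
    (hk : s.sup ∈ s) (ho : Odd s.sup) (hmax : ∀ j ∈ s, j ≤ s.sup) :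
    (∀ i ∈ (s.sup + 2) ::ₘ s.erase s.sup, 0 < i) ∧
    ((s.sup + 2) ::ₘ s.erase s.sup).sum = s.sum + 2 ∧
    Good3 ((s.sup + 2) ::ₘ s.erase s.sup) ∧
    ((s.sup + 2) ::ₘ s.erase s.sup).sup = s.sup + 2 ∧
    (s.sup + 2 - 1) ∉ (s.sup + 2) ::ₘ s.erase s.sup := by
  set k := s.sup with hdefk
  set e := s.erase k with hdefe
  have hmem : ∀ j ∈ e, j ∈ s := fun j hj => Multiset.mem_of_le (Multiset.erase_le k s) hj
  have hle : ∀ j ∈ e, j ≤ k := fun j hj => hmax j (hmem j hj)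
  have hko : k % 2 = 1 := Nat.odd_iff.1 ho
  have hnotmem1 : (k + 1) ∉ e := fun h => by have := hle _ h; omega
  have hnotmem2 : (k + 2) ∉ e := fun h => by have := hle _ h; omega
  have hmaxt : ∀ j ∈ (k + 2) ::ₘ e, j ≤ k + 2 := by
    intro j hj
    rcases Multiset.mem_cons.1 hj with rfl | hj'
    · omega
    · have := hle j hj'; omega
  refine ⟨?_, ?_, ⟨?_, k + 2, Multiset.mem_cons_self _ _, ?_, ?_, hmaxt⟩, ?_, ?_⟩
  · intro i hi
    rcases Multiset.mem_cons.1 hi with rfl | hi'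
    · omega
    · exact hpos i (hmem i hi')
  · rw [Multiset.sum_cons, hdefe]
    conv_rhs => rw [← Multiset.cons_erase hk, Multiset.sum_cons]
    omega
  · -- even parts not repeated
    intro j hj hev
    have hj2 : j % 2 = 0 := Nat.even_iff.1 hev
    rcases Multiset.mem_cons.1 hj with rfl | hj'
    · omega
    · have hne : j ≠ k + 2 := by intro h; omega
      rw [Multiset.count_cons_of_ne hne]
      have hjk : j ≠ k := by intro h; omega
      rw [hdefe, Multiset.count_erase_of_ne hjk]
      exact he j (hmem j hj') hev
  · rw [Nat.odd_iff] at *; omega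
  · rw [Multiset.count_cons_self, Multiset.count_eq_zero.2 hnotmem2]
  · exact sup_eq_of (Multiset.mem_cons_self _ _) hmaxt
  · intro h
    rcases Multiset.mem_cons.1 h with h' | h'
    · omega
    · exact hnotmem1 (by simpa using h')

/-- Facts about the map subtracting 2 from the (unique) largest part, in the case
where `sup - 1` is not a part. -/
lemma downFacts {s : Multiset ℕ} (hbig : 4 ≤ s.sum) (hpos : ∀ i ∈ s, 0 < i)
    (he : ∀ j ∈ s, Even j → s.count j = 1)
    (hk : s.sup ∈ s) (ho : Odd s.sup) (hc : s.count s.sup = 1)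
    (hmax : ∀ j ∈ s, j ≤ s.sup) (hq : s.sup - 1 ∉ s) :
    3 ≤ s.sup ∧
    (∀ i ∈ (s.sup - 2) ::ₘ s.erase s.sup, 0 < i) ∧
    ((s.sup - 2) ::ₘ s.erase s.sup).sum + 2 = s.sum ∧
    Good1 ((s.sup - 2) ::ₘ s.erase s.sup) ∧
    ((s.sup - 2) ::ₘ s.erase s.sup).sup = s.sup - 2 := by
  set k := s.sup with hdefk
  set e := s.erase k with hdefe
  have hmem : ∀ j ∈ e, j ∈ s := fun j hj => Multiset.mem_of_le (Multiset.erase_le k s) hj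
  have hko : k % 2 = 1 := Nat.odd_iff.1 ho
  have h3 : 3 ≤ k := by
    by_contra h
    have hk1 : k = 1 := by omega
    have hall : ∀ b ∈ s, b = 1 := by
      intro b hb
      have := hmax b hb
      have := hpos b hb
      omega
    have hrep : s = Multiset.replicate s.card 1 := Multiset.eq_replicate_card.2 hall
    have hcard : s.card = 1 := by
      have := hc
      rw [hk1, hrep, Multiset.count_replicate_self] at this
      simpa using this
    have : s.sum = 1 := by
      rw [hrep, Multiset.sum_replicate, hcard]; simp
    omega
  have hknot : k ∉ e := by
    rw [hdefe, ← Multiset.count_eq_zero, Multiset.count_erase_self, hc]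
  have hle : ∀ j ∈ e, j ≤ k - 2 := by
    intro j hj
    have h1 : j ≤ k := hmax j (hmem j hj)
    have h2 : j ≠ k := fun h => hknot (h ▸ hj)
    have h3' : j ≠ k - 1 := fun h => hq (by rw [← h]; exact hmem j hj)
    omega
  have hmaxt : ∀ j ∈ (k - 2) ::ₘ e, j ≤ k - 2 := by
    intro j hj
    rcases Multiset.mem_cons.1 hj with rfl | hj'
    · exact le_rfl
    · exact hle j hj'
  refine ⟨h3, ?_, ?_, ⟨?_, k - 2, Multiset.mem_cons_self _ _, ?_, hmaxt⟩, ?_⟩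
  · intro i hi
    rcases Multiset.mem_cons.1 hi with rfl | hi'
    · omega
    · exact hpos i (hmem i hi')
  · rw [Multiset.sum_cons, hdefe]
    conv_rhs => rw [← Multiset.cons_erase hk, Multiset.sum_cons]
    omega
  · intro j hj hev
    have hj2 : j % 2 = 0 := Nat.even_iff.1 hev
    rcases Multiset.mem_cons.1 hj with rfl | hj'
    · omega
    · have hne : j ≠ k - 2 := by intro h; omega
      rw [Multiset.count_cons_of_ne hne]
      have hjk : j ≠ k := by intro h; omega
      rw [hdefe, Multiset.count_erase_of_ne hjk]
      exact he j (hmem j hj') hev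
  · rw [Nat.odd_iff] at *; omega
  · exact sup_eq_of (Multiset.mem_cons_self _ _) hmaxt

end A

noncomputable section Amaps

lemma downFacts' (n : ℕ) (hn : 2 ≤ n) (p : (n + 2).Partition)
    (h : Good3 p.parts ∧ p.parts.sup - 1 ∉ p.parts) :
    3 ≤ p.parts.sup ∧
    (∀ i ∈ (p.parts.sup - 2) ::ₘ p.parts.erase p.parts.sup, 0 < i) ∧
    ((p.parts.sup - 2) ::ₘ p.parts.erase p.parts.sup).sum = n ∧
    Good1 ((p.parts.sup - 2) ::ₘ p.parts.erase p.parts.sup) ∧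
    ((p.parts.sup - 2) ::ₘ p.parts.erase p.parts.sup).sup = p.parts.sup - 2 := by
  obtain ⟨hk, ho, hc, hmax⟩ := src3_facts h.1
  have hbig : 4 ≤ p.parts.sum := by rw [p.parts_sum]; omega
  obtain ⟨h3, hpos, hsum, hgood, hsup⟩ :=
    downFacts hbig (fun i hi => p.parts_pos hi) h.1.1 hk ho hc hmax h.2
  rw [p.parts_sum] at hsum
  exact ⟨h3, hpos, by omega, hgood, hsup⟩

lemma upFacts' (n : ℕ) (p : n.Partition) (h : Good1 p.parts) :
    (∀ i ∈ (p.parts.sup + 2) ::ₘ p.parts.erase p.parts.sup, 0 < i) ∧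
    ((p.parts.sup + 2) ::ₘ p.parts.erase p.parts.sup).sum = n + 2 ∧
    Good3 ((p.parts.sup + 2) ::ₘ p.parts.erase p.parts.sup) ∧
    ((p.parts.sup + 2) ::ₘ p.parts.erase p.parts.sup).sup = p.parts.sup + 2 ∧
    (p.parts.sup + 2 - 1) ∉ (p.parts.sup + 2) ::ₘ p.parts.erase p.parts.sup := by
  obtain ⟨hk, ho, hmax⟩ := src1_facts h
  obtain ⟨hpos, hsum, hgood, hsup, hnot⟩ :=
    upFacts (fun i hi => p.parts_pos hi) h.1 hk ho hmax
  rw [p.parts_sum] at hsum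
  exact ⟨hpos, hsum, hgood, hsup, hnot⟩

def mapDown (n : ℕ) (hn : 2 ≤ n)
    (x : {p : (n + 2).Partition // Good3 p.parts ∧ p.parts.sup - 1 ∉ p.parts}) :
    {p : n.Partition // Good1 p.parts} :=
  ⟨⟨(x.1.parts.sup - 2) ::ₘ x.1.parts.erase x.1.parts.sup,
    fun {i} hi => (downFacts' n hn x.1 x.2).2.1 i hi,
    (downFacts' n hn x.1 x.2).2.2.1⟩,
    (downFacts' n hn x.1 x.2).2.2.2.1⟩

def mapUp (n : ℕ) (x : {p : n.Partition // Good1 p.parts}) :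
    {p : (n + 2).Partition // Good3 p.parts ∧ p.parts.sup - 1 ∉ p.parts} :=
  ⟨⟨(x.1.parts.sup + 2) ::ₘ x.1.parts.erase x.1.parts.sup,
    fun {i} hi => (upFacts' n x.1 x.2).1 i hi,
    (upFacts' n x.1 x.2).2.1⟩,
    (upFacts' n x.1 x.2).2.2.1,
    by
      have h := upFacts' n x.1 x.2
      show ((x.1.parts.sup + 2) ::ₘ x.1.parts.erase x.1.parts.sup).sup - 1 ∉
        ((x.1.parts.sup + 2) ::ₘ x.1.parts.erase x.1.parts.sup)
      rw [h.2.2.2.1]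
      exact h.2.2.2.2⟩

lemma cardA (n : ℕ) (hn : 2 ≤ n) :
    Nat.card {p : (n + 2).Partition // Good3 p.parts ∧ p.parts.sup - 1 ∉ p.parts}
      = Nat.card {p : n.Partition // Good1 p.parts} := by
  apply Nat.card_congr
  refine ⟨mapDown n hn, mapUp n, ?_, ?_⟩
  · intro x
    obtain ⟨hk, ho, hc, hmax⟩ := src3_facts x.2.1
    have h := downFacts' n hn x.1 x.2
    apply Subtype.ext
    apply Nat.Partition.ext
    show ((((x.1.parts.sup - 2) ::ₘ x.1.parts.erase x.1.parts.sup).sup + 2) ::ₘ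
        ((x.1.parts.sup - 2) ::ₘ x.1.parts.erase x.1.parts.sup).erase
          ((x.1.parts.sup - 2) ::ₘ x.1.parts.erase x.1.parts.sup).sup) = x.1.parts
    rw [h.2.2.2.2, Multiset.erase_cons_head]
    have h3 := h.1
    have he2 : x.1.parts.sup - 2 + 2 = x.1.parts.sup := by omega
    rw [he2, Multiset.cons_erase hk]
  · intro x
    obtain ⟨hk, ho, hmax⟩ := src1_facts x.2
    have h := upFacts' n x.1 x.2
    apply Subtype.ext
    apply Nat.Partition.ext
    show ((((x.1.parts.sup + 2) ::ₘ x.1.parts.erase x.1.parts.sup).sup - 2) ::ₘ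
        ((x.1.parts.sup + 2) ::ₘ x.1.parts.erase x.1.parts.sup).erase
          ((x.1.parts.sup + 2) ::ₘ x.1.parts.erase x.1.parts.sup).sup) = x.1.parts
    rw [h.2.2.2.1, Multiset.erase_cons_head]
    have he2 : x.1.parts.sup + 2 - 2 = x.1.parts.sup := by omega
    rw [he2, Multiset.cons_erase hk]

end Amaps

section B

/-- Facts about replacing two copies of the largest part `M` by `M+2` and `M+1`. -/
lemma upFacts2 {s : Multiset ℕ} (hpos : ∀ i ∈ s, 0 < i)
    (he : ∀ j ∈ s, Even j → s.count j = 1)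
    (hk : s.sup ∈ s) (ho : Odd s.sup) (hc : 2 ≤ s.count s.sup)
    (hmax : ∀ j ∈ s, j ≤ s.sup) :
    (∀ i ∈ (s.sup + 2) ::ₘ (s.sup + 1) ::ₘ (s.erase s.sup).erase s.sup, 0 < i) ∧
    ((s.sup + 2) ::ₘ (s.sup + 1) ::ₘ (s.erase s.sup).erase s.sup).sum = s.sum + 3 ∧
    Good3 ((s.sup + 2) ::ₘ (s.sup + 1) ::ₘ (s.erase s.sup).erase s.sup) ∧
    ((s.sup + 2) ::ₘ (s.sup + 1) ::ₘ (s.erase s.sup).erase s.sup).sup = s.sup + 2 ∧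
    (s.sup + 2 - 1) ∈ (s.sup + 2) ::ₘ (s.sup + 1) ::ₘ (s.erase s.sup).erase s.sup ∧
    s.sup ::ₘ s.sup ::ₘ (s.erase s.sup).erase s.sup = s := by
  set M := s.sup with hdefM
  set e := (s.erase M).erase M with hdefe
  have hMo : M % 2 = 1 := Nat.odd_iff.1 ho
  have hM1 : M ∈ s.erase M := by
    rw [← Multiset.count_pos, Multiset.count_erase_self]; omega
  have hdecomp : M ::ₘ M ::ₘ e = s := by
    rw [hdefe, Multiset.cons_erase hM1, Multiset.cons_erase hk]
  have hele : e ≤ s := le_trans (Multiset.erase_le _ _) (Multiset.erase_le _ _)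
  have hmem : ∀ j ∈ e, j ∈ s := fun j hj => Multiset.mem_of_le hele hj
  have hle : ∀ j ∈ e, j ≤ M := fun j hj => hmax j (hmem j hj)
  have hM1e : (M + 1) ∉ e := fun h => by have := hle _ h; omega
  have hM2e : (M + 2) ∉ e := fun h => by have := hle _ h; omega
  have hmaxt : ∀ j ∈ (M + 2) ::ₘ (M + 1) ::ₘ e, j ≤ M + 2 := by
    intro j hj
    rcases Multiset.mem_cons.1 hj with rfl | hj'
    · omega
    rcases Multiset.mem_cons.1 hj' with rfl | hj''
    · omega
    · have := hle j hj''; omega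
  refine ⟨?_, ?_, ⟨?_, M + 2, Multiset.mem_cons_self _ _, ?_, ?_, hmaxt⟩, ?_, ?_, hdecomp⟩
  · intro i hi
    rcases Multiset.mem_cons.1 hi with rfl | hi'
    · omega
    rcases Multiset.mem_cons.1 hi' with rfl | hi''
    · omega
    · exact hpos i (hmem i hi'')
  · have h1 : s.sum = M + (M + e.sum) := by
      rw [← hdecomp, Multiset.sum_cons, Multiset.sum_cons]
    rw [Multiset.sum_cons, Multiset.sum_cons, h1]
    omega
  · intro j hj hev
    have hj2 : j % 2 = 0 := Nat.even_iff.1 hev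
    rcases Multiset.mem_cons.1 hj with rfl | hj'
    · omega
    rcases Multiset.mem_cons.1 hj' with rfl | hj''
    · -- j = M + 1
      rw [Multiset.count_cons_of_ne (by omega), Multiset.count_cons_self,
        Multiset.count_eq_zero.2 hM1e]
    · -- j ∈ e
      have hjM : j ≤ M := hle j hj''
      rw [Multiset.count_cons_of_ne (by omega), Multiset.count_cons_of_ne (by omega),
        hdefe, Multiset.count_erase_of_ne (by omega), Multiset.count_erase_of_ne (by omega)]
      exact he j (hmem j hj'') hev
  · rw [Nat.odd_iff] at *; omega
  · rw [Multiset.count_cons_self, Multiset.count_cons_of_ne (by omega),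
      Multiset.count_eq_zero.2 hM2e]
  · exact sup_eq_of (Multiset.mem_cons_self _ _) hmaxt
  · have : M + 2 - 1 = M + 1 := by omega
    rw [this]
    exact Multiset.mem_cons_of_mem (Multiset.mem_cons_self _ _)

/-- Facts about replacing the parts `K` and `K-1` by two copies of `K-2`. -/
lemma downFacts2 {s : Multiset ℕ} (hpos : ∀ i ∈ s, 0 < i)
    (he : ∀ j ∈ s, Even j → s.count j = 1)
    (hk : s.sup ∈ s) (ho : Odd s.sup) (hc : s.count s.sup = 1)
    (hmax : ∀ j ∈ s, j ≤ s.sup) (hq : s.sup - 1 ∈ s) :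
    3 ≤ s.sup ∧
    (∀ i ∈ (s.sup - 2) ::ₘ (s.sup - 2) ::ₘ (s.erase s.sup).erase (s.sup - 1), 0 < i) ∧
    ((s.sup - 2) ::ₘ (s.sup - 2) ::ₘ (s.erase s.sup).erase (s.sup - 1)).sum + 3 = s.sum ∧
    Good2 ((s.sup - 2) ::ₘ (s.sup - 2) ::ₘ (s.erase s.sup).erase (s.sup - 1)) ∧
    ((s.sup - 2) ::ₘ (s.sup - 2) ::ₘ (s.erase s.sup).erase (s.sup - 1)).sup = s.sup - 2 ∧
    s.sup ::ₘ (s.sup - 1) ::ₘ (s.erase s.sup).erase (s.sup - 1) = s := by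
  set K := s.sup with hdefK
  set e := (s.erase K).erase (K - 1) with hdefe
  have hKo : K % 2 = 1 := Nat.odd_iff.1 ho
  have h3 : 3 ≤ K := by
    have := hpos _ hq
    omega
  have hK1 : K - 1 ∈ s.erase K := (Multiset.mem_erase_of_ne (by omega)).2 hq
  have hdecomp : K ::ₘ (K - 1) ::ₘ e = s := by
    rw [hdefe, Multiset.cons_erase hK1, Multiset.cons_erase hk]
  have hele : e ≤ s := le_trans (Multiset.erase_le _ _) (Multiset.erase_le _ _)
  have hmem : ∀ j ∈ e, j ∈ s := fun j hj => Multiset.mem_of_le hele hj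
  have hKnot : K ∉ e := by
    intro hKe
    have : K ∈ s.erase K := Multiset.mem_of_le (Multiset.erase_le _ _) hKe
    rw [← Multiset.count_pos, Multiset.count_erase_self, hc] at this
    omega
  have hK1e : (K - 1) ∉ e := by
    have hcnt : s.count (K - 1) = 1 := he _ hq (Nat.even_iff.2 (by omega))
    rw [hdefe, ← Multiset.count_pos, Multiset.count_erase_self,
      Multiset.count_erase_of_ne (by omega), hcnt]
    omega
  have hle : ∀ j ∈ e, j ≤ K - 2 := by
    intro j hj
    have h1 : j ≤ K := hmax j (hmem j hj)
    have h2 : j ≠ K := fun h => hKnot (h ▸ hj)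
    have h3' : j ≠ K - 1 := fun h => hK1e (h ▸ hj)
    omega
  have hmaxt : ∀ j ∈ (K - 2) ::ₘ (K - 2) ::ₘ e, j ≤ K - 2 := by
    intro j hj
    rcases Multiset.mem_cons.1 hj with rfl | hj'
    · exact le_rfl
    rcases Multiset.mem_cons.1 hj' with rfl | hj''
    · exact le_rfl
    · exact hle j hj''
  refine ⟨h3, ?_, ?_, ⟨?_, K - 2, Multiset.mem_cons_self _ _, ?_, ?_, hmaxt⟩, ?_, hdecomp⟩
  · intro i hi
    rcases Multiset.mem_cons.1 hi with rfl | hi'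
    · omega
    rcases Multiset.mem_cons.1 hi' with rfl | hi''
    · omega
    · exact hpos i (hmem i hi'')
  · have h1 : s.sum = K + ((K - 1) + e.sum) := by
      rw [← hdecomp, Multiset.sum_cons, Multiset.sum_cons]
    rw [Multiset.sum_cons, Multiset.sum_cons, h1]
    omega
  · intro j hj hev
    have hj2 : j % 2 = 0 := Nat.even_iff.1 hev
    rcases Multiset.mem_cons.1 hj with rfl | hj'
    · omega
    rcases Multiset.mem_cons.1 hj' with rfl | hj''
    · omega
    · have hjK : j ≤ K - 2 := hle j hj''
      rw [Multiset.count_cons_of_ne (by omega), Multiset.count_cons_of_ne (by omega),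
        hdefe, Multiset.count_erase_of_ne ?hne1, Multiset.count_erase_of_ne (by omega)]
      · exact he j (hmem j hj'') hev
      case hne1 =>
        intro h
        exact hK1e (h ▸ hj'')
  · rw [Nat.odd_iff] at *; omega
  · rw [Multiset.count_cons_self, Multiset.count_cons_self]
    omega
  · exact sup_eq_of (Multiset.mem_cons_self _ _) hmaxt

end B

noncomputable section Bmaps

lemma downFacts2' (n : ℕ) (hn : 2 ≤ n) (p : (n + 2).Partition)
    (h : Good3 p.parts ∧ p.parts.sup - 1 ∈ p.parts) :
    3 ≤ p.parts.sup ∧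
    (∀ i ∈ (p.parts.sup - 2) ::ₘ (p.parts.sup - 2) ::ₘ
        (p.parts.erase p.parts.sup).erase (p.parts.sup - 1), 0 < i) ∧
    ((p.parts.sup - 2) ::ₘ (p.parts.sup - 2) ::ₘ
        (p.parts.erase p.parts.sup).erase (p.parts.sup - 1)).sum = n - 1 ∧
    Good2 ((p.parts.sup - 2) ::ₘ (p.parts.sup - 2) ::ₘ
        (p.parts.erase p.parts.sup).erase (p.parts.sup - 1)) ∧
    ((p.parts.sup - 2) ::ₘ (p.parts.sup - 2) ::ₘ
        (p.parts.erase p.parts.sup).erase (p.parts.sup - 1)).sup = p.parts.sup - 2 ∧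
    p.parts.sup ::ₘ (p.parts.sup - 1) ::ₘ
        (p.parts.erase p.parts.sup).erase (p.parts.sup - 1) = p.parts := by
  obtain ⟨hk, ho, hc, hmax⟩ := src3_facts h.1
  obtain ⟨h3, hpos, hsum, hgood, hsup, hdec⟩ :=
    downFacts2 (fun i hi => p.parts_pos hi) h.1.1 hk ho hc hmax h.2
  rw [p.parts_sum] at hsum
  exact ⟨h3, hpos, by omega, hgood, hsup, hdec⟩

lemma upFacts2' (n : ℕ) (hn : 2 ≤ n) (p : (n - 1).Partition) (h : Good2 p.parts) :
    (∀ i ∈ (p.parts.sup + 2) ::ₘ (p.parts.sup + 1) ::ₘ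
        (p.parts.erase p.parts.sup).erase p.parts.sup, 0 < i) ∧
    ((p.parts.sup + 2) ::ₘ (p.parts.sup + 1) ::ₘ
        (p.parts.erase p.parts.sup).erase p.parts.sup).sum = n + 2 ∧
    Good3 ((p.parts.sup + 2) ::ₘ (p.parts.sup + 1) ::ₘ
        (p.parts.erase p.parts.sup).erase p.parts.sup) ∧
    ((p.parts.sup + 2) ::ₘ (p.parts.sup + 1) ::ₘ
        (p.parts.erase p.parts.sup).erase p.parts.sup).sup = p.parts.sup + 2 ∧
    (p.parts.sup + 2 - 1) ∈ (p.parts.sup + 2) ::ₘ (p.parts.sup + 1) ::ₘ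
        (p.parts.erase p.parts.sup).erase p.parts.sup ∧
    p.parts.sup ::ₘ p.parts.sup ::ₘ
        (p.parts.erase p.parts.sup).erase p.parts.sup = p.parts := by
  obtain ⟨hk, ho, hc, hmax⟩ := src2_facts h
  obtain ⟨hpos, hsum, hgood, hsup, hmem1, hdec⟩ :=
    upFacts2 (fun i hi => p.parts_pos hi) h.1 hk ho hc hmax
  rw [p.parts_sum] at hsum
  exact ⟨hpos, by omega, hgood, hsup, hmem1, hdec⟩

def mapDown2 (n : ℕ) (hn : 2 ≤ n)
    (x : {p : (n + 2).Partition // Good3 p.parts ∧ p.parts.sup - 1 ∈ p.parts}) :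
    {p : (n - 1).Partition // Good2 p.parts} :=
  ⟨⟨(x.1.parts.sup - 2) ::ₘ (x.1.parts.sup - 2) ::ₘ
      (x.1.parts.erase x.1.parts.sup).erase (x.1.parts.sup - 1),
    fun {i} hi => (downFacts2' n hn x.1 x.2).2.1 i hi,
    (downFacts2' n hn x.1 x.2).2.2.1⟩,
    (downFacts2' n hn x.1 x.2).2.2.2.1⟩

def mapUp2 (n : ℕ) (hn : 2 ≤ n)
    (x : {p : (n - 1).Partition // Good2 p.parts}) :
    {p : (n + 2).Partition // Good3 p.parts ∧ p.parts.sup - 1 ∈ p.parts} :=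
  ⟨⟨(x.1.parts.sup + 2) ::ₘ (x.1.parts.sup + 1) ::ₘ
      (x.1.parts.erase x.1.parts.sup).erase x.1.parts.sup,
    fun {i} hi => (upFacts2' n hn x.1 x.2).1 i hi,
    (upFacts2' n hn x.1 x.2).2.1⟩,
    (upFacts2' n hn x.1 x.2).2.2.1,
    by
      have h := upFacts2' n hn x.1 x.2
      show ((x.1.parts.sup + 2) ::ₘ (x.1.parts.sup + 1) ::ₘ
          (x.1.parts.erase x.1.parts.sup).erase x.1.parts.sup).sup - 1 ∈
        ((x.1.parts.sup + 2) ::ₘ (x.1.parts.sup + 1) ::ₘ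
          (x.1.parts.erase x.1.parts.sup).erase x.1.parts.sup)
      rw [h.2.2.2.1]
      exact h.2.2.2.2.1⟩

lemma cardB (n : ℕ) (hn : 2 ≤ n) :
    Nat.card {p : (n + 2).Partition // Good3 p.parts ∧ p.parts.sup - 1 ∈ p.parts}
      = Nat.card {p : (n - 1).Partition // Good2 p.parts} := by
  apply Nat.card_congr
  refine ⟨mapDown2 n hn, mapUp2 n hn, ?_, ?_⟩
  · intro x
    have h := downFacts2' n hn x.1 x.2
    apply Subtype.ext
    apply Nat.Partition.ext
    set K := x.1.parts.sup with hdefK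
    set e := (x.1.parts.erase K).erase (K - 1) with hdefe
    set t := (K - 2) ::ₘ (K - 2) ::ₘ e with hdeft
    show (t.sup + 2) ::ₘ (t.sup + 1) ::ₘ (t.erase t.sup).erase t.sup = x.1.parts
    rw [h.2.2.2.2.1]
    have h3 := h.1
    have e1 : K - 2 + 2 = K := by omega
    have e2 : K - 2 + 1 = K - 1 := by omega
    rw [e1, e2, hdeft, Multiset.erase_cons_head, Multiset.erase_cons_head]
    exact h.2.2.2.2.2
  · intro x
    have h := upFacts2' n hn x.1 x.2
    apply Subtype.ext
    apply Nat.Partition.ext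
    set M := x.1.parts.sup with hdefM
    set e := (x.1.parts.erase M).erase M with hdefe
    set t := (M + 2) ::ₘ (M + 1) ::ₘ e with hdeft
    show (t.sup - 2) ::ₘ (t.sup - 2) ::ₘ (t.erase t.sup).erase (t.sup - 1) = x.1.parts
    rw [h.2.2.2.1]
    have e1 : M + 2 - 2 = M := by omega
    have e2 : M + 2 - 1 = M + 1 := by omega
    rw [e1, e2, hdeft, Multiset.erase_cons_head, Multiset.erase_cons_head]
    exact h.2.2.2.2.2

end Bmaps

lemma card_split' {α : Type*} [Finite α] (P Q : α → Prop) :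
    Nat.card {x // P x} = Nat.card {x // P x ∧ Q x} + Nat.card {x // P x ∧ ¬Q x} := by
  classical
  rw [Nat.card_congr (Equiv.subtypeEquivRight
    (q := fun x => (P x ∧ Q x) ∨ (P x ∧ ¬Q x)) (fun x => by tauto))]
  rw [Nat.card_congr (subtypeOrEquiv _ _
    (Pi.disjoint_iff.mpr fun x => Prop.disjoint_iff.mpr (by tauto)))]
  exact Nat.card_sum

lemma de_split (m : ℕ) : DE1 m = DE2 m + DE3 m := by
  classical
  show Nat.card {p : m.Partition // Good1 p.parts}
    = Nat.card {p : m.Partition // Good2 p.parts} + Nat.card {p : m.Partition // Good3 p.parts}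
  have hiff : ∀ p : m.Partition, Good1 p.parts ↔ (Good2 p.parts ∨ Good3 p.parts) := by
    intro p
    constructor
    · rintro ⟨he, k, hk, ho, hmax⟩
      have hc : 0 < p.parts.count k := Multiset.count_pos.2 hk
      rcases eq_or_ne (p.parts.count k) 1 with h1 | h1
      · exact Or.inr ⟨he, k, hk, ho, h1, hmax⟩
      · exact Or.inl ⟨he, k, hk, ho, by omega, hmax⟩
    · rintro (⟨he, k, hk, ho, _, hmax⟩ | ⟨he, k, hk, ho, _, hmax⟩) <;>
        exact ⟨he, k, hk, ho, hmax⟩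
  rw [Nat.card_congr (Equiv.subtypeEquivRight hiff)]
  rw [Nat.card_congr (subtypeOrEquiv _ _ (Pi.disjoint_iff.mpr fun p =>
    Prop.disjoint_iff.mpr ?_))]
  · exact Nat.card_sum
  · rintro ⟨⟨_, k, hk, _, h2, hmax⟩, ⟨_, k', hk', _, h1, hmax'⟩⟩
    have : k = k' := le_antisymm (hmax' _ hk) (hmax _ hk')
    subst this
    omega

theorem stmt_9 (n : ℕ) (hn : 1 < n) :
    DE3 (n + 2) + DE3 (n - 1) = DE1 n + DE1 (n - 1) := by
  have hn2 : 2 ≤ n := hn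
  have key : DE3 (n + 2) = DE2 (n - 1) + DE1 n := by
    show Nat.card {p : (n + 2).Partition // Good3 p.parts} = _
    rw [card_split' (fun p : (n + 2).Partition => Good3 p.parts)
      (fun p => p.parts.sup - 1 ∈ p.parts)]
    congr 1
    · exact cardB n hn2
    · exact cardA n hn2
  have hsplit := de_split (n - 1)
  omega
end

section
/- For every complex number q with |q| < 1, the generating function identity Σ_{n≥0} DE2(n) q^n = Σ_{n≥0} (−q^2; q^2)_n q^{4n+2} / (q; q^2)_{n+1} holds (the constant term DE2(0) being 0). -/
open Finset

section PiProd

variable {ι : Type*}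

theorem summable_pi_prod {k : ℕ} {f : Fin k → ι → ℝ} (hf0 : ∀ i n, 0 ≤ f i n)
    (hf : ∀ i, Summable (f i)) : Summable fun a : Fin k → ι => ∏ i, f i (a i) := by
  induction k with
  | zero => exact Summable.of_finite
  | succ k ih =>
    have := (hf 0).mul_of_nonneg (ih (fun i => hf0 i.succ) fun i => hf i.succ) (hf0 0)
      fun _ => prod_nonneg fun i _ => hf0 i.succ _
    refine ((Fin.consEquiv fun _ => ι).symm.summable_iff.mpr this).congr fun a => ?_
    exact (Fin.prod_univ_succ fun i => f i (a i)).symm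

variable {K : Type*} [NormedField K]

theorem summable_norm_pi_prod {k : ℕ} {f : Fin k → ι → K}
    (hf : ∀ i, Summable fun n => ‖f i n‖) :
    Summable fun a : Fin k → ι => ‖∏ i, f i (a i)‖ := by
  simpa only [norm_prod] using summable_pi_prod (fun i n => norm_nonneg (f i n)) hf

theorem tsum_pi_prod [CompleteSpace K] {k : ℕ} {f : Fin k → ι → K}
    (hf : ∀ i, Summable fun n => ‖f i n‖) :
    ∑' a : Fin k → ι, ∏ i, f i (a i) = ∏ i, ∑' n, f i n := by
  induction k with
  | zero => simp
  | succ k ih =>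
    rw [Fin.prod_univ_succ, ← ih fun i => hf i.succ,
      tsum_mul_tsum_of_summable_norm (hf 0) (summable_norm_pi_prod fun i => hf i.succ),
      ← (Fin.consEquiv fun _ => ι).symm.tsum_eq]
    exact tsum_congr fun a => Fin.prod_univ_succ _

end PiProd

theorem norm_pow_lt_one {K : Type*} [NormedField K] {x : K} (hx : ‖x‖ < 1) {c : ℕ}
    (hc : c ≠ 0) : ‖x ^ c‖ < 1 := by
  rw [norm_pow]
  exact pow_lt_one₀ (norm_nonneg x) hx hc

theorem Real.prod_inv_one_sub_le_exp {ι : Type*} (s : Finset ι) {t : ι → ℝ} {r : ℝ}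
    (ht0 : ∀ i, 0 ≤ t i) (htr : ∀ i, t i ≤ r) (hr : r < 1) :
    ∏ i ∈ s, (1 - t i)⁻¹ ≤ Real.exp ((∑ i ∈ s, t i) / (1 - r)) := by
  have hle : ∀ i, (1 - t i)⁻¹ ≤ 1 + t i / (1 - r) := fun i => by
    have h1 : 0 < 1 - t i := by linarith [htr i]
    have h2 : 0 < 1 - r := by linarith
    have key : t i ≤ t i / (1 - r) * (1 - t i) := by
      rw [div_mul_eq_mul_div, le_div_iff₀ h2]
      nlinarith [ht0 i, htr i]
    rw [inv_le_iff_one_le_mul₀ h1]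
    linarith
  calc ∏ i ∈ s, (1 - t i)⁻¹ ≤ ∏ i ∈ s, (1 + t i / (1 - r)) :=
        prod_le_prod (fun i _ => inv_nonneg.mpr (by linarith [htr i])) fun i _ => hle i
    _ ≤ Real.exp (∑ i ∈ s, t i / (1 - r)) :=
        Real.prod_one_add_le_exp_sum s fun i => div_nonneg (ht0 i) (by linarith)
    _ = Real.exp ((∑ i ∈ s, t i) / (1 - r)) := by rw [sum_div]

theorem sum_range_pow_le_inv_one_sub {r : ℝ} (h0 : 0 ≤ r) (h1 : r < 1) {e : ℕ → ℕ}
    (he : ∀ i, i ≤ e i) (n : ℕ) : ∑ i ∈ range n, r ^ e i ≤ (1 - r)⁻¹ :=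
  calc ∑ i ∈ range n, r ^ e i ≤ ∑ i ∈ range n, r ^ i :=
        sum_le_sum fun i _ => pow_le_pow_of_le_one h0 h1.le (he i)
    _ ≤ r ^ 0 / (1 - r) := by rw [range_eq_Ico]; exact geom_sum_Ico_le_of_lt_one h0 h1
    _ = (1 - r)⁻¹ := by rw [pow_zero, one_div]

def IsDE2 (s : Multiset ℕ) : Prop :=
  (∀ k ∈ s, Even k → s.count k = 1) ∧
    ∃ k ∈ s, Odd k ∧ 2 ≤ s.count k ∧ ∀ j ∈ s, j ≤ k

theorem IsDE2.count_le_one {s : Multiset ℕ} (hs : IsDE2 s) {k : ℕ} (hk : Even k) :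
    s.count k ≤ 1 := by
  by_cases h : k ∈ s
  · exact (hs.1 k h hk).le
  · simp [Multiset.count_eq_zero_of_notMem h]

namespace Nat.Partition

def sigmaSubtypeEquiv (P : Multiset ℕ → Prop) :
    (Σ n : ℕ, {p : n.Partition // P p.parts}) ≃
      {s : Multiset ℕ // (∀ k ∈ s, 0 < k) ∧ P s} where
  toFun w := ⟨w.2.1.parts, fun _ hk => w.2.1.parts_pos hk, w.2.2⟩
  invFun s := ⟨s.1.sum, ⟨s.1, fun hk => s.2.1 _ hk, rfl⟩, s.2.2⟩
  left_inv := by rintro ⟨n, ⟨p, _, rfl⟩, _⟩; rfl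
  right_inv _ := rfl

theorem tsum_card_mul_pow {R : Type*} [NormedRing R] [CompleteSpace R]
    (P : Multiset ℕ → Prop) (x : R)
    (h : Summable fun s : {s : Multiset ℕ // (∀ k ∈ s, 0 < k) ∧ P s} => x ^ s.1.sum) :
    ∑' n, (Nat.card {p : n.Partition // P p.parts} : R) * x ^ n =
      ∑' s : {s : Multiset ℕ // (∀ k ∈ s, 0 < k) ∧ P s}, x ^ s.1.sum := by
  set e := sigmaSubtypeEquiv P
  have he : ∀ w, x ^ (e w).1.sum = x ^ w.1 := fun w => by rw [← w.2.1.parts_sum]; rfl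
  have hsum : Summable fun w : Σ n : ℕ, {p : n.Partition // P p.parts} => x ^ w.1 :=
    (e.summable_iff.mpr h).congr he
  calc ∑' n, (Nat.card {p : n.Partition // P p.parts} : R) * x ^ n
      = ∑' n : ℕ, ∑' _ : {p : n.Partition // P p.parts}, x ^ n := by
        refine tsum_congr fun n => ?_
        have := Fintype.ofFinite {p : n.Partition // P p.parts}
        rw [tsum_fintype, sum_const, Finset.card_univ, nsmul_eq_mul, Nat.card_eq_fintype_card]
    _ = ∑' w : Σ n : ℕ, {p : n.Partition // P p.parts}, x ^ w.1 := hsum.tsum_sigma.symm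
    _ = ∑' s : {s : Multiset ℕ // (∀ k ∈ s, 0 < k) ∧ P s}, x ^ s.1.sum := by
        rw [← e.tsum_eq]
        exact tsum_congr fun w => (he w).symm

end Nat.Partition

namespace DE2

/-- Encodes the partitions counted by `DE2` with largest part `2m+1`: besides two copies of
`2m+1`, `y.1 i` more copies of the odd part `2i+1`, and the even part `2i+2` iff `y.2 i = 1`. -/
abbrev Data (m : ℕ) := (Fin (m + 1) → ℕ) × (Fin m → Fin 2)

def parts (m : ℕ) (y : Data m) : Multiset ℕ :=
  Multiset.replicate 2 (2 * m + 1) + ∑ i, Multiset.replicate (y.1 i) (2 * (i : ℕ) + 1) +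
    ∑ i, Multiset.replicate (y.2 i : ℕ) (2 * (i : ℕ) + 2)

theorem mem_parts {m : ℕ} {y : Data m} {k : ℕ} (hk : k ∈ parts m y) :
    0 < k ∧ k ≤ 2 * m + 1 := by
  simp only [parts, Multiset.mem_add, Multiset.mem_sum, Multiset.mem_replicate] at hk
  rcases hk with (⟨-, rfl⟩ | ⟨i, -, -, rfl⟩) | ⟨i, -, -, rfl⟩ <;> omega

theorem count_parts_odd (m : ℕ) (y : Data m) (j : Fin (m + 1)) :
    (parts m y).count (2 * (j : ℕ) + 1) = y.1 j + if (j : ℕ) = m then 2 else 0 := by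
  simp only [parts, Multiset.count_add, Multiset.count_sum', Multiset.count_replicate]
  rw [Fintype.sum_eq_single j fun i hi => if_neg fun h => hi (by ext; omega),
    sum_eq_zero fun i _ => if_neg (by omega), if_pos rfl]
  split_ifs <;> omega

theorem count_parts_even (m : ℕ) (y : Data m) (j : Fin m) :
    (parts m y).count (2 * (j : ℕ) + 2) = y.2 j := by
  simp only [parts, Multiset.count_add, Multiset.count_sum', Multiset.count_replicate]
  rw [Fintype.sum_eq_single j fun i hi => if_neg fun h => hi (by ext; omega),
    sum_eq_zero fun i _ => if_neg (by omega), if_pos rfl, if_neg (by omega)]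
  simp

theorem two_le_count_parts (m : ℕ) (y : Data m) : 2 ≤ (parts m y).count (2 * m + 1) := by
  have := count_parts_odd m y (Fin.last m)
  simp only [Fin.val_last, if_pos] at this
  omega

theorem two_mul_add_one_mem_parts (m : ℕ) (y : Data m) : 2 * m + 1 ∈ parts m y :=
  Multiset.count_pos.mp (by have := two_le_count_parts m y; omega)

theorem isDE2_parts (m : ℕ) (y : Data m) : IsDE2 (parts m y) := by
  refine ⟨fun k hk hkeven => ?_, 2 * m + 1, two_mul_add_one_mem_parts m y, odd_two_mul_add_one m,
    two_le_count_parts m y, fun j hj => (mem_parts hj).2⟩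
  obtain ⟨hk0, hkm⟩ := mem_parts hk
  obtain ⟨j, rfl⟩ : ∃ j : Fin m, k = 2 * (j : ℕ) + 2 :=
    ⟨⟨k / 2 - 1, by grind⟩, by grind⟩
  have := Multiset.count_pos.mpr hk
  rw [count_parts_even] at this ⊢
  omega

theorem parts_injective : Function.Injective fun z : Σ m, Data m => parts z.1 z.2 := by
  rintro ⟨m, a, b⟩ ⟨m', a', b'⟩ h
  dsimp only at h
  obtain rfl : m = m' := by
    have := (mem_parts (h ▸ two_mul_add_one_mem_parts m (a, b))).2
    have := (mem_parts (h.symm ▸ two_mul_add_one_mem_parts m' (a', b'))).2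
    omega
  have ha : a = a' := funext fun j => by
    have := count_parts_odd m (a, b) j
    rw [h, count_parts_odd] at this
    dsimp only at this
    omega
  have hb : b = b' := funext fun j => Fin.ext <| by
    rw [← count_parts_even m (a, b), h, count_parts_even]
  rw [ha, hb]

theorem exists_parts_eq {s : Multiset ℕ} (hpos : ∀ k ∈ s, 0 < k) (hs : IsDE2 s) :
    ∃ m y, parts m y = s := by
  obtain ⟨-, k, hk, ⟨m, rfl⟩, hcount, hmax⟩ := id hs
  refine ⟨m, (fun j => s.count (2 * (j : ℕ) + 1) - if (j : ℕ) = m then 2 else 0,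
    fun j => ⟨s.count (2 * (j : ℕ) + 2),
      Nat.lt_succ_of_le (hs.count_le_one ⟨j + 1, by ring⟩)⟩), ?_⟩
  ext k
  by_cases hk : 0 < k ∧ k ≤ 2 * m + 1
  · obtain ⟨j, rfl | rfl⟩ : ∃ j, k = 2 * j + 1 ∨ k = 2 * j + 2 :=
      ⟨(k - 1) / 2, by omega⟩
    · rw [count_parts_odd m _ ⟨j, by omega⟩]
      dsimp only
      split_ifs with hjm
      · subst hjm
        omega
      · rfl
    · exact count_parts_even m _ ⟨j, by omega⟩
  · rw [Multiset.count_eq_zero_of_notMem fun h => hk (mem_parts h),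
      Multiset.count_eq_zero_of_notMem fun h => hk ⟨hpos k h, hmax k h⟩]

noncomputable def sigmaDataEquiv :
    (Σ m, Data m) ≃ {s : Multiset ℕ // (∀ k ∈ s, 0 < k) ∧ IsDE2 s} :=
  Equiv.ofBijective
    (fun z => ⟨parts z.1 z.2, fun _ hk => (mem_parts hk).1, isDE2_parts z.1 z.2⟩)
    ⟨fun _ _ h => parts_injective (congrArg Subtype.val h), fun s => by
      obtain ⟨m, y, h⟩ := exists_parts_eq s.2.1 s.2.2
      exact ⟨⟨m, y⟩, Subtype.ext h⟩⟩

theorem pow_sum_parts {M : Type*} [CommMonoid M] (x : M) (m : ℕ) (y : Data m) :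
    x ^ (parts m y).sum = x ^ (4 * m + 2) *
      ((∏ i : Fin (m + 1), (x ^ (2 * (i : ℕ) + 1)) ^ y.1 i) *
        ∏ i : Fin m, (x ^ (2 * (i : ℕ) + 2)) ^ (y.2 i : ℕ)) := by
  have hsum : ∀ {n : ℕ} (f : Fin n → Multiset ℕ), (∑ i, f i).sum = ∑ i, (f i).sum :=
    fun f => map_sum Multiset.sumAddMonoidHom f univ
  simp only [parts, Multiset.sum_add, hsum, Multiset.sum_replicate, smul_eq_mul, ← pow_mul,
    prod_pow_eq_pow_sum, ← pow_add]
  congr 1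
  simp only [mul_comm]
  ring

variable {K : Type*} [NormedField K] {x : K}

theorem summable_norm_pow_sum_parts (hx : ‖x‖ < 1) (m : ℕ) :
    Summable fun y : Data m => ‖x ^ (parts m y).sum‖ := by
  have hodd : ∀ i : Fin (m + 1), Summable fun n => ‖(x ^ (2 * (i : ℕ) + 1)) ^ n‖ :=
    fun _ => summable_norm_geometric_of_norm_lt_one (norm_pow_lt_one hx (Nat.succ_ne_zero _))
  have heven :
      ∀ i : Fin m, Summable fun c : Fin 2 => ‖(x ^ (2 * (i : ℕ) + 2)) ^ (c : ℕ)‖ :=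
    fun _ => .of_finite
  have := (summable_norm_pi_prod hodd).mul_of_nonneg (summable_norm_pi_prod heven)
    (fun _ => norm_nonneg _) fun _ => norm_nonneg _
  refine (this.mul_left ‖x ^ (4 * m + 2)‖).congr fun y => ?_
  rw [pow_sum_parts, norm_mul, norm_mul]

theorem tsum_pow_sum_parts [CompleteSpace K] (hx : ‖x‖ < 1) (m : ℕ) :
    ∑' y : Data m, x ^ (parts m y).sum = (∏ i ∈ range m, (1 + x ^ (2 * i + 2))) *
      x ^ (4 * m + 2) / ∏ i ∈ range (m + 1), (1 - x ^ (2 * i + 1)) := by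
  have hodd : ∀ i : Fin (m + 1), Summable fun n => ‖(x ^ (2 * (i : ℕ) + 1)) ^ n‖ :=
    fun _ => summable_norm_geometric_of_norm_lt_one (norm_pow_lt_one hx (Nat.succ_ne_zero _))
  have heven :
      ∀ i : Fin m, Summable fun c : Fin 2 => ‖(x ^ (2 * (i : ℕ) + 2)) ^ (c : ℕ)‖ :=
    fun _ => .of_finite
  have hA := summable_norm_pi_prod hodd
  have hB := summable_norm_pi_prod heven
  rw [tsum_congr (pow_sum_parts x m), tsum_mul_left, ← tsum_mul_tsum_of_summable_norm hA hB,
    tsum_pi_prod hodd, tsum_pi_prod heven]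
  have hgeom : ∀ i : Fin (m + 1),
      ∑' n, (x ^ (2 * (i : ℕ) + 1)) ^ n = (1 - x ^ (2 * (i : ℕ) + 1))⁻¹ :=
    fun _ => tsum_geometric_of_norm_lt_one (norm_pow_lt_one hx (Nat.succ_ne_zero _))
  have hbit : ∀ i : Fin m,
      ∑' c : Fin 2, (x ^ (2 * (i : ℕ) + 2)) ^ (c : ℕ) = 1 + x ^ (2 * (i : ℕ) + 2) :=
    fun _ => by simp [tsum_fintype, Fin.sum_univ_two]
  simp only [hgeom, hbit, prod_inv_distrib,
    Fin.prod_univ_eq_prod_range (fun i => 1 - x ^ (2 * i + 1)),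
    Fin.prod_univ_eq_prod_range (fun i => 1 + x ^ (2 * i + 2))]
  ring

theorem tsum_pow_sum_parts_le {r : ℝ} (h0 : 0 ≤ r) (h1 : r < 1) (m : ℕ) :
    (∏ i ∈ range m, (1 + r ^ (2 * i + 2))) * r ^ (4 * m + 2) /
        ∏ i ∈ range (m + 1), (1 - r ^ (2 * i + 1)) ≤
      Real.exp (1 - r)⁻¹ * Real.exp ((1 - r)⁻¹ / (1 - r)) * (r ^ 4) ^ m := by
  have hB : ∏ i ∈ range m, (1 + r ^ (2 * i + 2)) ≤ Real.exp (1 - r)⁻¹ :=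
    (Real.prod_one_add_le_exp_sum _ fun _ => pow_nonneg h0 _).trans <| Real.exp_le_exp.mpr <|
      sum_range_pow_le_inv_one_sub h0 h1 (e := fun i => 2 * i + 2) (fun _ => by omega) m
  have hA : (∏ i ∈ range (m + 1), (1 - r ^ (2 * i + 1)))⁻¹ ≤
      Real.exp ((1 - r)⁻¹ / (1 - r)) := by
    rw [← prod_inv_distrib]
    refine (Real.prod_inv_one_sub_le_exp _ (fun _ => pow_nonneg h0 _)
      (fun _ => pow_le_of_le_one h0 h1.le (Nat.succ_ne_zero _)) h1).trans ?_
    exact Real.exp_le_exp.mpr <| div_le_div_of_nonneg_right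
      (sum_range_pow_le_inv_one_sub h0 h1 (e := fun i => 2 * i + 1) (fun _ => by omega) _)
      (by linarith)
  have hpow : r ^ (4 * m + 2) ≤ (r ^ 4) ^ m := by
    rw [← pow_mul]
    exact pow_le_pow_of_le_one h0 h1.le (by omega)
  rw [div_eq_mul_inv]
  calc _ ≤ Real.exp (1 - r)⁻¹ * (r ^ 4) ^ m * Real.exp ((1 - r)⁻¹ / (1 - r)) := by
        gcongr
        exact inv_nonneg.mpr <| prod_nonneg fun _ _ => sub_nonneg.mpr (pow_le_one₀ h0 h1.le)
    _ = _ := by ring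

theorem summable_pow_sum_parts {r : ℝ} (h0 : 0 ≤ r) (h1 : r < 1) :
    Summable fun z : Σ m, Data m => r ^ (parts z.1 z.2).sum := by
  have hr : ‖r‖ < 1 := by rwa [Real.norm_of_nonneg h0]
  refine (summable_sigma_of_nonneg fun _ => pow_nonneg h0 _).mpr
    ⟨fun m => (summable_norm_pow_sum_parts hr m).of_norm, ?_⟩
  refine .of_nonneg_of_le (fun m => tsum_nonneg fun _ => pow_nonneg h0 _) (fun m => ?_)
    ((summable_geometric_of_lt_one (by positivity) (pow_lt_one₀ h0 h1 four_ne_zero)).mul_left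
      (Real.exp (1 - r)⁻¹ * Real.exp ((1 - r)⁻¹ / (1 - r))))
  rw [tsum_pow_sum_parts hr]
  exact tsum_pow_sum_parts_le h0 h1 m

end DE2

theorem qPoch_sq_self (q : ℂ) (n : ℕ) :
    qPoch q (q ^ 2) n = ∏ i ∈ range n, (1 - q ^ (2 * i + 1)) :=
  prod_congr rfl fun _ _ => by ring

theorem qPoch_neg_sq_sq (q : ℂ) (n : ℕ) :
    qPoch (-q ^ 2) (q ^ 2) n = ∏ i ∈ range n, (1 + q ^ (2 * i + 2)) :=
  prod_congr rfl fun _ _ => by ring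

theorem stmt_11 (q : ℂ) (hq : ‖q‖ < 1) :
    ∑' n : ℕ, (DE2 n : ℂ) * q ^ n =
      ∑' n : ℕ, qPoch (-q ^ 2) (q ^ 2) n * q ^ (4 * n + 2) / qPoch q (q ^ 2) (n + 1) := by
  have hsum : Summable fun z : Σ m, DE2.Data m => q ^ (DE2.parts z.1 z.2).sum :=
    .of_norm (by simpa only [norm_pow] using DE2.summable_pow_sum_parts (norm_nonneg q) hq)
  calc ∑' n : ℕ, (DE2 n : ℂ) * q ^ n
      = ∑' s : {s : Multiset ℕ // (∀ k ∈ s, 0 < k) ∧ IsDE2 s}, q ^ s.1.sum :=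
        Nat.Partition.tsum_card_mul_pow IsDE2 q (DE2.sigmaDataEquiv.summable_iff.mp hsum)
    _ = ∑' z : Σ m, DE2.Data m, q ^ (DE2.parts z.1 z.2).sum :=
        (DE2.sigmaDataEquiv.tsum_eq _).symm
    _ = ∑' m, ∑' y, q ^ (DE2.parts m y).sum := hsum.tsum_sigma
    _ = _ := tsum_congr fun m => by
        rw [DE2.tsum_pow_sum_parts hq, qPoch_sq_self, qPoch_neg_sq_sq]
end
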